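/- arXiv:1210.5337 — 12 statements merged into one kernel-verified Lean document; each statement's English description precedes it below -/
import Mathlib

section
/- Let w be an m-linear form on V that is Q-invariant for some Q ∈ GL(V), i.e. w(X₁,...,X_m) = w(Q X₁,...,Q X_m) for all X_i. Define π_Q(w)(X₁,...,X_m) = Σ_{k=1}^{m} w(Q X_k, Q X_{k+1}, ..., Q X_m, X₁, ..., X_{k-1}). Then π_Q(w) is twisted cyclic with twisting element Q: π_Q(w)(X₁,...,X_{m-1},X_m) = π_Q(w)(Q X_m, X₁, ..., X_{m-1}) for all X_i. -/
/-- The twisted cyclic shift: `(X₁, …, X_M) ↦ (Q X_M, X₁, …, X_{M-1})`. -/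
def cycOp {K V : Type*} [Field K] [AddCommGroup V] [Module K V] {m : ℕ}
    (Q : V ≃ₗ[K] V) (X : Fin (m + 1) → V) : Fin (m + 1) → V :=
  Fin.cons (Q (X (Fin.last m))) (Fin.init X)

/-- `π_Q(w)(X₁,…,X_M) = Σ_{k=1}^{M} w(Q X_k, …, Q X_M, X₁, …, X_{k-1})`,
expressed via iterates of the twisted cyclic shift. -/
def piQ {K V : Type*} [Field K] [AddCommGroup V] [Module K V] {m : ℕ}
    (Q : V ≃ₗ[K] V) (f : (Fin (m + 1) → V) → K) : (Fin (m + 1) → V) → K :=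
  fun X => ∑ k ∈ Finset.range (m + 1), f ((cycOp Q)^[k + 1] X)

/-!
Writing `C` for the twisted cyclic shift, `π_Q(w)(X) = Σ_{k=1}^{m+1} w(C^k X)`, so replacing `X`
by `C X` only trades the term `w(C X)` for `w(C^{m+2} X)`. Since `C^{m+1}` applies `Q` to every
argument, `Q`-invariance of `w` makes these two terms equal.
-/

theorem Finset.sum_range_iterate_succ_apply_eq {α M : Type*} [AddCommMonoid M] (T : α → α)
    (f : α → M) {N : ℕ} (hf : ∀ y, f (T^[N] y) = f y) (x : α) :
    ∑ k ∈ range N, f (T^[k + 1] (T x)) = ∑ k ∈ range N, f (T^[k + 1] x) := by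
  cases N with
  | zero => simp
  | succ n =>
    rw [sum_range_succ, sum_range_succ', hf]
    simp only [← Function.iterate_succ_apply]
    rfl

section cycOp

variable {K V : Type*} [Field K] [AddCommGroup V] [Module K V] {m : ℕ} (Q : V ≃ₗ[K] V)

theorem cycOp_iterate_apply_add (Y : Fin (m + 1) → V) :
    ∀ (n j : ℕ) (h : j + n < m + 1), (cycOp Q)^[n] Y ⟨j + n, h⟩ = Y ⟨j, by omega⟩
  | 0, _, _ => rfl
  | n + 1, j, h => by
    rw [Function.iterate_succ_apply']
    have : (⟨j + (n + 1), h⟩ : Fin (m + 1)) = (⟨j + n, by omega⟩ : Fin m).succ := rfl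
    rw [this, cycOp, Fin.cons_succ, Fin.init]
    exact cycOp_iterate_apply_add Y n j (by omega)

theorem cycOp_iterate_card (Y : Fin (m + 1) → V) :
    (cycOp Q)^[m + 1] Y = fun i => Q (Y i) := by
  funext ⟨i, hi⟩
  obtain ⟨k, rfl⟩ := Nat.exists_eq_add_of_le (Nat.lt_succ_iff.mp hi)
  change (cycOp Q)^[i + (k + 1)] Y _ = _
  rw [Function.iterate_add_apply]
  have hfront := cycOp_iterate_apply_add Q ((cycOp Q)^[k + 1] Y) i 0 (by omega)
  simp only [zero_add] at hfront
  rw [hfront, Function.iterate_succ_apply']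
  exact congrArg Q (cycOp_iterate_apply_add Q Y k i (by omega))

end cycOp

theorem stmt_3_general {K V : Type*} [Field K] [AddCommGroup V] [Module K V]
    {m : ℕ}
    (w : MultilinearMap K (fun _ : Fin (m + 1) => V) K)
    (Q : V ≃ₗ[K] V)
    (hinv : ∀ X : Fin (m + 1) → V, w X = w (fun i => Q (X i))) :
    ∀ X : Fin (m + 1) → V, piQ Q ⇑w X = piQ Q ⇑w (cycOp Q X) := by
  intro X
  refine (Finset.sum_range_iterate_succ_apply_eq (cycOp Q) w (fun Y => ?_) X).symm
  rw [cycOp_iterate_card, ← hinv]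

/-- If `w` is a `Q`-invariant multilinear form then `π_Q(w)` is
twisted cyclic with twisting element `Q`. -/
theorem stmt_3 {K V : Type*} [Field K] [AddCommGroup V] [Module K V]
    {m : ℕ} (hm : 1 ≤ m)
    (w : MultilinearMap K (fun _ : Fin (m + 1) => V) K)
    (Q : V ≃ₗ[K] V)
    (hinv : ∀ X : Fin (m + 1) → V, w X = w (fun i => Q (X i))) :
    ∀ X : Fin (m + 1) → V, piQ Q ⇑w X = piQ Q ⇑w (cycOp Q X) :=
  stmt_3_general w Q hinv
end

section
/- Let K have characteristic 0, Q ∈ GL(V), and let π_Q be the operator on Q-invariant m-linear forms defined by π_Q(w)(X₁,...,X_m) = Σ_{k=1}^{m} w(Q X_k,...,Q X_m, X₁,...,X_{k-1}). Then (1/m)·π_Q is a projection of the space of Q-invariant m-linear forms onto the subspace of Q-twisted-cyclic m-linear forms; in particular, if w is Q-twisted cyclic then (1/m)π_Q(w) = w. -/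
/-- `(1/M) ⬝ π_Q`. -/
def projQ {K V : Type*} [Field K] [AddCommGroup V] [Module K V] {m : ℕ}
    (Q : V ≃ₗ[K] V) (f : (Fin (m + 1) → V) → K) : (Fin (m + 1) → V) → K :=
  fun X => ((m + 1 : K))⁻¹ * piQ Q f X

section CyclicShift

variable {K V : Type*} [Field K] [AddCommGroup V] [Module K V] {m : ℕ} (Q : V ≃ₗ[K] V)

lemma cycOp_apply (X : Fin (m + 1) → V) (j : Fin (m + 1)) :
    cycOp Q X j = if (j : ℕ) = 0 then Q (X (Fin.last m)) else X ⟨(j : ℕ) - 1, by omega⟩ := by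
  induction j using Fin.cases with
  | zero => simp [cycOp]
  | succ j =>
    simp only [cycOp, Fin.cons_succ, Fin.init, Fin.val_succ, Nat.add_one_ne_zero, if_false]
    exact congrArg X (Fin.ext (by simp))

lemma iterate_cycOp_apply (k : ℕ) (hk : k ≤ m + 1) (X : Fin (m + 1) → V) (i : Fin (m + 1)) :
    (cycOp Q)^[k] X i =
      if h : (i : ℕ) < k then Q (X ⟨(i : ℕ) + (m + 1) - k, by omega⟩)
      else X ⟨(i : ℕ) - k, by omega⟩ := by
  induction k generalizing X with
  | zero => simp
  | succ k ih =>
    rw [Function.iterate_succ_apply, ih (by omega)]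
    by_cases hik : (i : ℕ) < k
    · rw [dif_pos hik, dif_pos (by omega), cycOp_apply, if_neg (by simp; omega)]
      exact congrArg (fun t => Q (X t)) (Fin.ext (by simp; omega))
    · rw [dif_neg hik, cycOp_apply]
      by_cases hi : (i : ℕ) = k
      · rw [if_pos (by simp; omega), dif_pos (by omega)]
        exact congrArg (fun t => Q (X t)) (Fin.ext (by simp [Fin.last]; omega))
      · rw [if_neg (by simp; omega), dif_neg (by omega)]
        exact congrArg X (Fin.ext (by simp; omega))

lemma iterate_cycOp_period (X : Fin (m + 1) → V) : (cycOp Q)^[m + 1] X = fun i => Q (X i) := by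
  funext i
  rw [iterate_cycOp_apply Q (m + 1) le_rfl, dif_pos i.isLt]
  exact congrArg (fun t => Q (X t)) (Fin.ext (by simp))

lemma piQ_cycOp {f : (Fin (m + 1) → V) → K} (hf : ∀ X, f X = f (fun i => Q (X i)))
    (X : Fin (m + 1) → V) : piQ Q f (cycOp Q X) = piQ Q f X := by
  simp only [piQ, ← Function.iterate_succ_apply (cycOp Q) _ X]
  rw [Finset.sum_range_succ, Finset.sum_range_succ' (fun k => f ((cycOp Q)^[k + 1] X))]
  congr 1
  rw [Function.iterate_succ_apply, iterate_cycOp_period, ← hf, zero_add, Function.iterate_one]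

lemma projQ_cycOp {f : (Fin (m + 1) → V) → K} (hf : ∀ X, f X = f (fun i => Q (X i)))
    (X : Fin (m + 1) → V) : projQ Q f (cycOp Q X) = projQ Q f X := by
  simp only [projQ, piQ_cycOp Q hf]

lemma projQ_eq_self [CharZero K] {f : (Fin (m + 1) → V) → K}
    (hf : ∀ X, f X = f (cycOp Q X)) (X : Fin (m + 1) → V) : projQ Q f X = f X := by
  have hf_iterate (k : ℕ) : f ((cycOp Q)^[k] X) = f X :=
    congrFun (Function.iterate_invariant (funext fun Y => (hf Y).symm) k) X
  simp only [projQ, piQ, hf_iterate, Finset.sum_const, Finset.card_range, nsmul_eq_mul]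
  push_cast
  rw [← mul_assoc, inv_mul_cancel₀ (Nat.cast_add_one_ne_zero m), one_mul]

end CyclicShift

theorem stmt_4_general {K V : Type*} [Field K] [CharZero K] [AddCommGroup V] [Module K V]
    {m : ℕ} (Q : V ≃ₗ[K] V) :
    (∀ w : MultilinearMap K (fun _ : Fin (m + 1) => V) K,
      (∀ X, w X = w (fun i => Q (X i))) →
        (∀ X, projQ Q ⇑w X = projQ Q ⇑w (cycOp Q X)) ∧
        (∀ X, projQ Q (projQ Q ⇑w) X = projQ Q ⇑w X)) ∧
    (∀ w : MultilinearMap K (fun _ : Fin (m + 1) => V) K,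
      (∀ X, w X = w (cycOp Q X)) → ∀ X, projQ Q ⇑w X = w X) := by
  refine ⟨fun w hw => ?_, fun w hw => projQ_eq_self Q hw⟩
  have hcyclic : ∀ X, projQ Q ⇑w X = projQ Q ⇑w (cycOp Q X) :=
    fun X => (projQ_cycOp Q hw X).symm
  exact ⟨hcyclic, projQ_eq_self Q hcyclic⟩

/-- In characteristic `0`, `(1/M)·π_Q` is a projection of the
`Q`-invariant `M`-linear forms onto the `Q`-twisted-cyclic ones: for `Q`-invariant
`w` the form `(1/M)π_Q(w)` is `Q`-twisted cyclic and `(1/M)π_Q` is idempotent on it,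
and if `w` is `Q`-twisted cyclic then `(1/M)π_Q(w) = w`. -/
theorem stmt_4 {K V : Type*} [Field K] [CharZero K] [AddCommGroup V] [Module K V]
    {m : ℕ} (hm : 1 ≤ m) (Q : V ≃ₗ[K] V) :
    (∀ w : MultilinearMap K (fun _ : Fin (m + 1) => V) K,
      (∀ X, w X = w (fun i => Q (X i))) →
        (∀ X, projQ Q ⇑w X = projQ Q ⇑w (cycOp Q X)) ∧
        (∀ X, projQ Q (projQ Q ⇑w) X = projQ Q ⇑w X)) ∧
    (∀ w : MultilinearMap K (fun _ : Fin (m + 1) => V) K,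
      (∀ X, w X = w (cycOp Q X)) → ∀ X, projQ Q ⇑w X = w X) :=
  stmt_4_general Q
end

section
/- Let V be finite-dimensional with basis (e_λ), and let w be an m-linear form on V with components w_{λ₁...λ_m} = w(e_{λ₁},...,e_{λ_m}). Then w satisfies condition (i) (nondegeneracy in the last slot) if and only if there exists an element w̃ ∈ V^{⊗m}, with components w̃^{λ₁...λ_m}, such that Σ w̃^{μ λ₁...λ_{m-1}} w_{λ₁...λ_{m-1} ν} = δ^μ_ν for all μ, ν ∈ {1,...,n}. -/
/-!
Expanding every slot but the last in the basis, condition (i) says that the linear map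
`X ↦ (w(e_{λ₁}, …, e_{λ_{m-1}}, X))_λ` is injective. Over a field this holds iff its matrix
`(w_{λ₁…λ_{m-1}ν})` has a left inverse, and the entries of a left inverse are exactly the
components `w̃^{μλ₁…λ_{m-1}}`.
-/

theorem Matrix.exists_mul_eq_one_iff_injective_mulVec {K m n : Type*} [Field K] [Fintype m]
    [Fintype n] [DecidableEq n] (A : Matrix m n K) :
    (∃ B : Matrix n m K, B * A = 1) ↔ Function.Injective A.mulVec := by
  classical
  refine ⟨fun ⟨B, hBA⟩ => Function.LeftInverse.injective (g := B.mulVec) fun x => by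
    rw [Matrix.mulVec_mulVec, hBA, Matrix.one_mulVec], fun hA => ?_⟩
  obtain ⟨S, hS⟩ := A.toLin'.exists_leftInverse_of_injective (LinearMap.ker_eq_bot.mpr hA)
  refine ⟨LinearMap.toMatrix' S, ?_⟩
  rw [← LinearMap.toMatrix'_toLin' A, ← LinearMap.toMatrix'_comp, hS, LinearMap.toMatrix'_id]

namespace MultilinearMap

variable {R M N ι : Type*} {m : ℕ}

section Semiring

variable [CommSemiring R] [AddCommMonoid M] [Module R M] [AddCommMonoid N] [Module R N]

def lastSlotOn (w : MultilinearMap R (fun _ : Fin (m + 1) => M) N) (v : ι → M) :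
    M →ₗ[R] (Fin m → ι) → N :=
  LinearMap.pi fun l => w.curryRight fun i => v (l i)

@[simp]
theorem lastSlotOn_apply (w : MultilinearMap R (fun _ : Fin (m + 1) => M) N) (v : ι → M)
    (X : M) (l : Fin m → ι) : w.lastSlotOn v X l = w (Fin.snoc (fun i => v (l i)) X) :=
  rfl

theorem forall_snoc_eq_zero_iff [Finite ι] (w : MultilinearMap R (fun _ : Fin (m + 1) => M) N)
    (b : Module.Basis ι R M) (X : M) :
    (∀ Y, w (Fin.snoc Y X) = 0) ↔ w.lastSlotOn b X = 0 := by
  let g := (LinearMap.applyₗ X).compMultilinearMap w.curryRight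
  have hg : g = 0 ↔ w.lastSlotOn b X = 0 :=
    ⟨fun h => funext fun l => congr($h fun i => b (l i)), fun h =>
      Module.Basis.ext_multilinear (fun _ => b) fun l => _root_.congr_fun h l⟩
  rw [← hg, MultilinearMap.ext_iff]
  rfl

end Semiring

theorem forall_snoc_eq_zero_imp_iff_injective [CommRing R] [AddCommGroup M] [Module R M]
    [AddCommGroup N] [Module R N] [Finite ι]
    (w : MultilinearMap R (fun _ : Fin (m + 1) => M) N) (b : Module.Basis ι R M) :
    (∀ X, (∀ Y, w (Fin.snoc Y X) = 0) → X = 0) ↔ Function.Injective (w.lastSlotOn b) := by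
  simp only [forall_snoc_eq_zero_iff w b, ← LinearMap.ker_eq_bot, LinearMap.ker_eq_bot']

end MultilinearMap

theorem stmt_5_general {K : Type*} [Field K] {n m : ℕ}
    (w : MultilinearMap K (fun _ : Fin (m + 1) => (Fin n → K)) K) :
    (∀ X : Fin n → K,
        (∀ Y : Fin m → (Fin n → K), w (Fin.snoc Y X) = 0) → X = 0)
    ↔ ∃ wt : (Fin (m + 1) → Fin n) → K, ∀ μ ν : Fin n,
        ∑ l : Fin m → Fin n,
          wt (Fin.cons μ l) *
            w (Fin.snoc (fun i => Pi.single (l i) (1 : K)) (Pi.single ν (1 : K)))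
          = if μ = ν then 1 else 0 := by
  classical
  set T := w.lastSlotOn (Pi.basisFun K (Fin n))
  have hT : (LinearMap.toMatrix' T).mulVec = T := funext (LinearMap.toMatrix'_mulVec T)
  rw [w.forall_snoc_eq_zero_imp_iff_injective (Pi.basisFun K (Fin n)), ← hT,
    ← Matrix.exists_mul_eq_one_iff_injective_mulVec]
  have hBA (B : Matrix (Fin n) (Fin m → Fin n) K) (μ ν : Fin n) :
      (B * LinearMap.toMatrix' T) μ ν = ∑ l : Fin m → Fin n,
        B μ l * w (Fin.snoc (fun i => Pi.single (l i) (1 : K)) (Pi.single ν (1 : K))) := by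
    simp [Matrix.mul_apply, T]
  constructor
  · rintro ⟨B, hB⟩
    refine ⟨fun f => B (f 0) (Fin.tail f), fun μ ν => ?_⟩
    simpa [Fin.tail_cons, hBA, Matrix.one_apply] using congr_fun₂ hB μ ν
  · rintro ⟨wt, hwt⟩
    exact ⟨Matrix.of fun μ l => wt (Fin.cons μ l), Matrix.ext fun μ ν => by
      simpa [hBA, Matrix.one_apply] using hwt μ ν⟩

/-- A multilinear form `w` on `Kⁿ` is nondegenerate in its last slot
iff there exists `w̃ ∈ V^{⊗M}` (given by its components) with
`Σ_{λ₁…λ_{M-1}} w̃^{μλ₁…λ_{M-1}} w_{λ₁…λ_{M-1}ν} = δ^μ_ν`. -/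
theorem stmt_5 {K : Type*} [Field K] {n m : ℕ} (hn : 2 ≤ n) (hm : 1 ≤ m)
    (w : MultilinearMap K (fun _ : Fin (m + 1) => (Fin n → K)) K) :
    (∀ X : Fin n → K,
        (∀ Y : Fin m → (Fin n → K), w (Fin.snoc Y X) = 0) → X = 0)
    ↔ ∃ wt : (Fin (m + 1) → Fin n) → K, ∀ μ ν : Fin n,
        ∑ l : Fin m → Fin n,
          wt (Fin.cons μ l) *
            w (Fin.snoc (fun i => Pi.single (l i) (1 : K)) (Pi.single ν (1 : K)))
          = if μ = ν then 1 else 0 :=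
  stmt_5_general w
end

section
/- Let w be a preregular m-linear form on V with twisting element Q having matrix components Q^μ_ν in a basis (e_λ), and let w̃ ∈ V^{⊗m} satisfy Σ w̃^{μ λ₁...λ_{m-1}} w_{λ₁...λ_{m-1} ν} = δ^μ_ν. Then Σ w̃^{μ λ₁...λ_{m-1}} w_{ν λ₁...λ_{m-1}} = (Q^{-1})^μ_ν for all μ, ν. -/
/-! Twisted cyclicity moves `e_ν` from the first slot of `w` to the last one as `Q⁻¹ e_ν`.
Expanding `Q⁻¹ e_ν` in the basis, the defining property of `w̃` contracts the sum to the
`μ`-th component of `Q⁻¹ e_ν`. -/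

open Finset

section

variable {R : Type*} [CommSemiring R] {m : ℕ}

theorem MultilinearMap.apply_snoc_eq_sum_single
    {n : ℕ} (w : MultilinearMap R (fun _ : Fin (m + 1) => Fin n → R) R)
    (Y : Fin m → Fin n → R) (v : Fin n → R) :
    w (Fin.snoc Y v) = ∑ k, v k * w (Fin.snoc Y (Pi.single k 1)) := by
  have hlast : ∀ x, w (Fin.snoc Y x) = w.toLinearMap (Fin.snoc Y 0) (Fin.last m) x := fun x => by
    rw [MultilinearMap.toLinearMap_apply, Fin.update_snoc_last]
  simp_rw [hlast, LinearMap.pi_apply_eq_sum_univ _ v, smul_eq_mul]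
  refine sum_congr rfl fun k _ => ?_
  congr 3
  ext j
  simp [Pi.single_apply, eq_comm]

theorem MultilinearMap.apply_cons_eq_apply_snoc_symm {M N : Type*} [AddCommMonoid M]
    [Module R M] [AddCommMonoid N] [Module R N]
    (w : MultilinearMap R (fun _ : Fin (m + 1) => M) N) (Q : M ≃ₗ[R] M)
    (hQ : ∀ X : Fin (m + 1) → M, w X = w (Fin.cons (Q (X (Fin.last m))) (Fin.init X)))
    (x : M) (Y : Fin m → M) :
    w (Fin.cons x Y) = w (Fin.snoc Y (Q.symm x)) := by
  rw [hQ (Fin.snoc Y (Q.symm x)), Fin.snoc_last, Fin.init_snoc, Q.apply_symm_apply]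

end

theorem stmt_6_general {K : Type*} [Field K] {n m : ℕ}
    (w : MultilinearMap K (fun _ : Fin (m + 1) => (Fin n → K)) K)
    (Q : (Fin n → K) ≃ₗ[K] (Fin n → K))
    (hQ : ∀ X : Fin (m + 1) → (Fin n → K),
      w X = w (Fin.cons (Q (X (Fin.last m))) (Fin.init X)))
    (wt : (Fin (m + 1) → Fin n) → K)
    (hwt : ∀ μ ν : Fin n,
      ∑ l : Fin m → Fin n,
        wt (Fin.cons μ l) *
          w (Fin.snoc (fun i => Pi.single (l i) (1 : K)) (Pi.single ν (1 : K)))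
        = if μ = ν then 1 else 0) :
    ∀ μ ν : Fin n,
      ∑ l : Fin m → Fin n,
        wt (Fin.cons μ l) *
          w (Fin.cons (Pi.single ν (1 : K)) (fun i => Pi.single (l i) (1 : K)))
        = Q.symm (Pi.single ν (1 : K)) μ := by
  intro μ ν
  set v := Q.symm (Pi.single ν (1 : K))
  calc ∑ l : Fin m → Fin n, wt (Fin.cons μ l) *
          w (Fin.cons (Pi.single ν 1) (fun i => Pi.single (l i) 1))
      = ∑ l : Fin m → Fin n, wt (Fin.cons μ l) *
          ∑ k, v k * w (Fin.snoc (fun i => Pi.single (l i) 1) (Pi.single k 1)) :=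
        sum_congr rfl fun l _ => by
          rw [w.apply_cons_eq_apply_snoc_symm Q hQ, w.apply_snoc_eq_sum_single]
    _ = ∑ k, v k * ∑ l : Fin m → Fin n, wt (Fin.cons μ l) *
          w (Fin.snoc (fun i => Pi.single (l i) 1) (Pi.single k 1)) := by
        simp_rw [mul_sum, mul_left_comm]
        exact sum_comm
    _ = v μ := by simp only [hwt, mul_ite, mul_one, mul_zero, sum_ite_eq, mem_univ, if_true]

/-- For a preregular form `w` with twisting element `Q` and any polar
element `w̃` (with `Σ w̃^{μλ₁…λ_{M-1}} w_{λ₁…λ_{M-1}ν} = δ^μ_ν`), one has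
`Σ w̃^{μλ₁…λ_{M-1}} w_{νλ₁…λ_{M-1}} = (Q⁻¹)^μ_ν`. -/
theorem stmt_6 {K : Type*} [Field K] {n m : ℕ} (hn : 2 ≤ n) (hm : 1 ≤ m)
    (w : MultilinearMap K (fun _ : Fin (m + 1) => (Fin n → K)) K)
    (hnd : ∀ X : Fin n → K,
      (∀ Y : Fin m → (Fin n → K), w (Fin.snoc Y X) = 0) → X = 0)
    (Q : (Fin n → K) ≃ₗ[K] (Fin n → K))
    (hQ : ∀ X : Fin (m + 1) → (Fin n → K),
      w X = w (Fin.cons (Q (X (Fin.last m))) (Fin.init X)))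
    (wt : (Fin (m + 1) → Fin n) → K)
    (hwt : ∀ μ ν : Fin n,
      ∑ l : Fin m → Fin n,
        wt (Fin.cons μ l) *
          w (Fin.snoc (fun i => Pi.single (l i) (1 : K)) (Pi.single ν (1 : K)))
        = if μ = ν then 1 else 0) :
    ∀ μ ν : Fin n,
      ∑ l : Fin m → Fin n,
        wt (Fin.cons μ l) *
          w (Fin.cons (Pi.single ν (1 : K)) (fun i => Pi.single (l i) (1 : K)))
        = Q.symm (Pi.single ν (1 : K)) μ :=
  stmt_6_general w Q hQ wt hwt
end

section
/- Let H be a Hopf algebra with antipode S, and let v = (v^μ_ν) ∈ M_n(H) be a matrix such that Δ(v^μ_ν) = Σ_λ v^μ_λ ⊗ v^λ_ν and ε(v^μ_ν) = δ^μ_ν. Suppose Σ w_{ρ₁...ρ_m} v^{ρ₁}_{λ₁} ⋯ v^{ρ_m}_{λ_m} = w_{λ₁...λ_m}·1 for all indices, where w is an m-linear form satisfying condition (i), with polar element w̃ satisfying Σ w̃^{μ λ₁...λ_{m-1}} w_{λ₁...λ_{m-1}ν} = δ^μ_ν. Then S(v^μ_ν) = Σ w̃^{μ λ₁...λ_{m-1}}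 v^{ρ₁}_{λ₁} ⋯ v^{ρ_{m-1}}_{λ_{m-1}} w_{ρ₁...ρ_{m-1} ν} for all μ, ν. -/
/-!
The antipode of a multiplicative matrix `v` is its (two-sided) inverse in `Mₙ(H)`: the Hopf axiom
`m ∘ (id ⊗ S) ∘ Δ = η ∘ ε` says exactly `v · S(v) = 1`. On the other hand, contracting the
invariance of `w` with the polar element `w̃` produces an explicit left inverse `T` of `v`,
so `S(v) = T`.
-/

open TensorProduct

namespace Matrix

variable {R A ι : Type*} [CommSemiring R] [Semiring A] [HopfAlgebra R A] [Fintype ι]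
  [DecidableEq ι]

theorem mul_map_antipode_eq_one_of_comul_eq (v : Matrix ι ι A)
    (hcomul : ∀ i j, Coalgebra.comul (R := R) (v i j) = ∑ k, v i k ⊗ₜ[R] v k j)
    (hcounit : ∀ i j, Coalgebra.counit (R := R) (v i j) = if i = j then (1 : R) else 0) :
    v * v.map (HopfAlgebra.antipode R) = 1 := by
  ext i j
  have h := HopfAlgebra.mul_antipode_lTensor_comul_apply (R := R) (v i j)
  rw [hcomul, hcounit, map_sum, map_sum] at h
  simp only [LinearMap.lTensor_tmul, LinearMap.mul'_apply] at h
  simp only [mul_apply, map_apply]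
  rw [h, one_apply]
  split_ifs <;> simp

end Matrix

section PolarInverse

variable {K H ι : Type*} [CommSemiring K] [Semiring H] [Algebra K H] {m : ℕ}

theorem prod_ofFn_snoc (v : ι → ι → H) (ρ l : Fin m → ι) (a b : ι) :
    (List.ofFn fun i =>
        v (Fin.snoc (α := fun _ => ι) ρ a i) (Fin.snoc (α := fun _ => ι) l b i)).prod
      = (List.ofFn fun i => v (ρ i) (l i)).prod * v a b := by
  rw [List.ofFn_succ', List.prod_concat]
  simp [Fin.snoc_castSucc]

variable [Fintype ι]

def polarInverse (wc wt : (Fin (m + 1) → ι) → K) (v : ι → ι → H) : Matrix ι ι H :=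
  Matrix.of fun a b => ∑ l : Fin m → ι, ∑ ρ : Fin m → ι,
    (wt (Fin.cons a l) * wc (Fin.snoc ρ b)) • (List.ofFn fun i => v (ρ i) (l i)).prod

theorem sum_smul_prod_ofFn_snoc (wc : (Fin (m + 1) → ι) → K) (v : ι → ι → H)
    (l : Fin m → ι) (b : ι) :
    ∑ a, ∑ ρ : Fin m → ι, wc (Fin.snoc ρ a) • ((List.ofFn fun i => v (ρ i) (l i)).prod * v a b)
      = ∑ ρs : Fin (m + 1) → ι,
          wc ρs • (List.ofFn fun i => v (ρs i) (Fin.snoc (α := fun _ => ι) l b i)).prod := by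
  rw [← Fintype.sum_prod_type']
  refine Fintype.sum_equiv (Fin.snocEquiv fun _ => ι) _ _ fun ⟨a, ρ⟩ => ?_
  exact congrArg (wc (Fin.snoc ρ a) • ·) (prod_ofFn_snoc v ρ l a b).symm

variable [DecidableEq ι]

theorem polarInverse_mul_eq_one (wc wt : (Fin (m + 1) → ι) → K)
    (hwt : ∀ μ ν, ∑ l : Fin m → ι, wt (Fin.cons μ l) * wc (Fin.snoc l ν)
      = if μ = ν then 1 else 0)
    (v : ι → ι → H)
    (hpres : ∀ ls : Fin (m + 1) → ι,
      ∑ ρs : Fin (m + 1) → ι, wc ρs • (List.ofFn fun i => v (ρs i) (ls i)).prod = wc ls • 1) :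
    polarInverse wc wt v * Matrix.of v = 1 := by
  ext μ ν
  have hcontract : ∀ l : Fin m → ι,
      ∑ a, ∑ ρ : Fin m → ι,
        wc (Fin.snoc ρ a) • ((List.ofFn fun i => v (ρ i) (l i)).prod * v a ν)
        = wc (Fin.snoc l ν) • (1 : H) := fun l => by
    rw [sum_smul_prod_ofFn_snoc, hpres]
  calc (polarInverse wc wt v * Matrix.of v) μ ν
      = ∑ l : Fin m → ι, wt (Fin.cons μ l) • ∑ a, ∑ ρ : Fin m → ι,
          wc (Fin.snoc ρ a) • ((List.ofFn fun i => v (ρ i) (l i)).prod * v a ν) := by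
        simp only [Matrix.mul_apply, polarInverse, Matrix.of_apply, Finset.sum_mul,
          Finset.smul_sum, smul_mul_assoc, mul_smul]
        rw [Finset.sum_comm]
    _ = (∑ l : Fin m → ι, wt (Fin.cons μ l) * wc (Fin.snoc l ν)) • (1 : H) := by
        simp only [hcontract, smul_smul, Finset.sum_smul]
    _ = (1 : Matrix ι ι H) μ ν := by
        rw [hwt, Matrix.one_apply]
        split_ifs <;> simp

end PolarInverse

theorem stmt_9_general {K H : Type*} [Field K] [Ring H] [HopfAlgebra K H]
    {n m : ℕ}
    (wc wt : (Fin (m + 1) → Fin n) → K)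
    (hwt : ∀ μ ν : Fin n,
      ∑ l : Fin m → Fin n, wt (Fin.cons μ l) * wc (Fin.snoc l ν)
        = if μ = ν then 1 else 0)
    (v : Fin n → Fin n → H)
    (hcomul : ∀ μ ν : Fin n,
      Coalgebra.comul (R := K) (v μ ν) = ∑ lam : Fin n, v μ lam ⊗ₜ[K] v lam ν)
    (hcounit : ∀ μ ν : Fin n,
      Coalgebra.counit (R := K) (v μ ν) = if μ = ν then (1 : K) else 0)
    (hpres : ∀ ls : Fin (m + 1) → Fin n,
      ∑ ρs : Fin (m + 1) → Fin n,
        wc ρs • (List.ofFn fun i => v (ρs i) (ls i)).prod = wc ls • (1 : H)) :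
    ∀ μ ν : Fin n,
      HopfAlgebra.antipode (R := K) (v μ ν)
        = ∑ l : Fin m → Fin n, ∑ ρ : Fin m → Fin n,
            (wt (Fin.cons μ l) * wc (Fin.snoc ρ ν)) •
              (List.ofFn fun i => v (ρ i) (l i)).prod := by
  have hS : (Matrix.of v).map (HopfAlgebra.antipode K) = polarInverse wc wt v :=
    (left_inv_eq_right_inv (polarInverse_mul_eq_one wc wt hwt v hpres)
      (Matrix.mul_map_antipode_eq_one_of_comul_eq (Matrix.of v) hcomul hcounit)).symm
  intro μ ν
  exact congrFun (congrFun hS μ) ν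

/-- If a Hopf algebra `H` has a multiplicative matrix `v` preserving a
multilinear form `w` which admits a polar element `w̃`, then the antipode is given by
`S(v^μ_ν) = Σ w̃^{μλ₁…λ_{M-1}} v^{ρ₁}_{λ₁} ⋯ v^{ρ_{M-1}}_{λ_{M-1}} w_{ρ₁…ρ_{M-1}ν}`. -/
theorem stmt_9 {K H : Type*} [Field K] [Ring H] [HopfAlgebra K H]
    {n m : ℕ} (hn : 2 ≤ n) (hm : 1 ≤ m)
    (wc wt : (Fin (m + 1) → Fin n) → K)
    (hwt : ∀ μ ν : Fin n,
      ∑ l : Fin m → Fin n, wt (Fin.cons μ l) * wc (Fin.snoc l ν)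
        = if μ = ν then 1 else 0)
    (v : Fin n → Fin n → H)
    (hcomul : ∀ μ ν : Fin n,
      Coalgebra.comul (R := K) (v μ ν) = ∑ lam : Fin n, v μ lam ⊗ₜ[K] v lam ν)
    (hcounit : ∀ μ ν : Fin n,
      Coalgebra.counit (R := K) (v μ ν) = if μ = ν then (1 : K) else 0)
    (hpres : ∀ ls : Fin (m + 1) → Fin n,
      ∑ ρs : Fin (m + 1) → Fin n,
        wc ρs • (List.ofFn fun i => v (ρs i) (ls i)).prod = wc ls • (1 : H)) :
    ∀ μ ν : Fin n,
      HopfAlgebra.antipode (R := K) (v μ ν)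
        = ∑ l : Fin m → Fin n, ∑ ρ : Fin m → Fin n,
            (wt (Fin.cons μ l) * wc (Fin.snoc ρ ν)) •
              (List.ofFn fun i => v (ρ i) (l i)).prod :=
  stmt_9_general wc wt hwt v hcomul hcounit hpres
end

section
/- Let H be a Hopf algebra with a multiplicative matrix v = (v^μ_ν) (Δ(v^μ_ν) = Σ v^μ_λ ⊗ v^λ_ν, ε(v^μ_ν) = δ^μ_ν) preserving a nondegenerate bilinear form b: Σ b_{μν} v^μ_λ v^ν_ρ = b_{λρ}·1. Then the matrix v also preserves the inverse form: Σ b^{νλ} v^σ_ν v^τ_λ = b^{στ}·1 for all σ, τ, where (b^{μν}) is the inverse matrix of (b_{μν}). -/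
open TensorProduct Matrix

/-!
Write `V = (v^μ_ν)`, `W = (S v^μ_ν)` and `B`, `B'` for the two forms viewed as matrices over `H`.
The antipode axiom applied to `Δ v^μ_ν = Σ v^μ_λ ⊗ v^λ_ν` gives `V W = 1`, and the hypothesis reads
`Vᵀ B V = B`. Hence `Vᵀ B = Vᵀ B V W = B W`, so `V B' Vᵀ B = V B' B W = V W = 1`, and multiplying
on the right by `B'` gives `V B' Vᵀ = B'`, which is the claim.
-/

theorem mul_mul_eq_of_mul_mul_eq {M : Type*} [Monoid M] {b b' u v w : M}
    (hbb' : b * b' = 1) (hb'b : b' * b = 1) (hvw : v * w = 1) (h : u * b * v = b) :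
    v * b' * u = b' := by
  have hub : u * b = b * w := by
    rw [← mul_one (u * b), ← hvw, ← mul_assoc, h]
  calc v * b' * u = v * b' * u * (b * b') := by rw [hbb', mul_one]
    _ = v * (b' * b) * w * b' := by simp only [mul_assoc, ← mul_assoc u b, hub]
    _ = b' := by rw [hb'b, mul_one, hvw, one_mul]

theorem HopfAlgebra.mul_map_antipode_eq_one {R A ι : Type*} [CommSemiring R] [Semiring A]
    [HopfAlgebra R A] [Fintype ι] [DecidableEq ι] {v : Matrix ι ι A}
    (hcomul : ∀ i j, Coalgebra.comul (R := R) (v i j) = ∑ k, v i k ⊗ₜ[R] v k j)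
    (hcounit : ∀ i j, Coalgebra.counit (R := R) (v i j) = if i = j then 1 else 0) :
    v * v.map (antipode R) = 1 := by
  ext i j
  have h := mul_antipode_lTensor_comul_apply (R := R) (v i j)
  rw [hcomul, hcounit] at h
  simp only [map_sum, LinearMap.lTensor_tmul, LinearMap.mul'_apply] at h
  simp only [mul_apply, map_apply, h, one_apply]
  split_ifs <;> simp

theorem Matrix.transpose_mul_map_algebraMap_mul_apply {R A ι : Type*} [CommSemiring R]
    [Semiring A] [Algebra R A] [Fintype ι] (B : Matrix ι ι R) (V : Matrix ι ι A) (i j : ι) :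
    (Vᵀ * B.map (algebraMap R A) * V) i j = ∑ μ, ∑ ν, B μ ν • (V μ i * V ν j) := by
  simp only [mul_apply, transpose_apply, map_apply, Finset.sum_mul]
  rw [Finset.sum_comm]
  refine Finset.sum_congr rfl fun μ _ => Finset.sum_congr rfl fun ν _ => ?_
  rw [Algebra.smul_def, ← Algebra.commutes, mul_assoc]

theorem stmt_10_general {K H : Type*} [Field K] [Ring H] [HopfAlgebra K H]
    {n : ℕ}
    (B B' : Matrix (Fin n) (Fin n) K) (hBB' : B * B' = 1) (hB'B : B' * B = 1)
    (v : Fin n → Fin n → H)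
    (hcomul : ∀ μ ν : Fin n,
      Coalgebra.comul (R := K) (v μ ν) = ∑ lam : Fin n, v μ lam ⊗ₜ[K] v lam ν)
    (hcounit : ∀ μ ν : Fin n,
      Coalgebra.counit (R := K) (v μ ν) = if μ = ν then (1 : K) else 0)
    (hpres : ∀ lam ρ : Fin n,
      ∑ μ : Fin n, ∑ ν : Fin n, B μ ν • (v μ lam * v ν ρ) = B lam ρ • (1 : H)) :
    ∀ σ τ : Fin n,
      ∑ ν : Fin n, ∑ lam : Fin n, B' ν lam • (v σ ν * v τ lam) = B' σ τ • (1 : H) := by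
  intro σ τ
  let f := (algebraMap K H).mapMatrix (m := Fin n)
  have hBh : f B * f B' = 1 := by rw [← map_mul, hBB', map_one]
  have hB'h : f B' * f B = 1 := by rw [← map_mul, hB'B, map_one]
  have hinv := HopfAlgebra.mul_map_antipode_eq_one (v := of v) hcomul hcounit
  have hpres' : (of v)ᵀ * f B * of v = f B := by
    ext i j
    rw [RingHom.mapMatrix_apply, transpose_mul_map_algebraMap_mul_apply]
    simpa [Algebra.algebraMap_eq_smul_one] using hpres i j
  have key : (of v * f B' * (of v)ᵀ) σ τ = f B' σ τ := by
    rw [mul_mul_eq_of_mul_mul_eq hBh hB'h hinv hpres']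
  have expand := transpose_mul_map_algebraMap_mul_apply B' (of v)ᵀ σ τ
  rw [transpose_transpose] at expand
  rwa [RingHom.mapMatrix_apply, expand, map_apply, Algebra.algebraMap_eq_smul_one] at key

/-- If a Hopf algebra `H` has a multiplicative matrix `v` preserving a
nondegenerate bilinear form `b` (with matrix `B` and inverse `B'`), then `v` also
preserves the inverse form: `Σ b^{νλ} v^σ_ν v^τ_λ = b^{στ}·1`. -/
theorem stmt_10 {K H : Type*} [Field K] [Ring H] [HopfAlgebra K H]
    {n : ℕ} (hn : 2 ≤ n)
    (B B' : Matrix (Fin n) (Fin n) K) (hBB' : B * B' = 1) (hB'B : B' * B = 1)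
    (v : Fin n → Fin n → H)
    (hcomul : ∀ μ ν : Fin n,
      Coalgebra.comul (R := K) (v μ ν) = ∑ lam : Fin n, v μ lam ⊗ₜ[K] v lam ν)
    (hcounit : ∀ μ ν : Fin n,
      Coalgebra.counit (R := K) (v μ ν) = if μ = ν then (1 : K) else 0)
    (hpres : ∀ lam ρ : Fin n,
      ∑ μ : Fin n, ∑ ν : Fin n, B μ ν • (v μ lam * v ν ρ) = B lam ρ • (1 : H)) :
    ∀ σ τ : Fin n,
      ∑ ν : Fin n, ∑ lam : Fin n, B' ν lam • (v σ ν * v τ lam) = B' σ τ • (1 : H) :=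
  stmt_10_general B B' hBB' hB'B v hcomul hcounit hpres
end

section
/- Under the hypotheses of the previous setting (Hopf algebra H with multiplicative matrix v preserving the nondegenerate bilinear form b), the antipode is given by S(v^σ_ν) = Σ_{λ,μ} b^{σλ} v^μ_λ b_{μν} for all σ, ν. -/
open TensorProduct

/-!
The antipode is the convolution inverse of the identity, so for a multiplicative matrix `v` the
matrix `S(v)` is a right inverse of `v` in `Matrix ι ι H`. Invariance of `b` says `vᵀ b v = b`,
so `b⁻¹ vᵀ b` is a left inverse of `v`, and a left and a right inverse coincide.
-/

namespace Matrix

section Antipode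

variable {K H ι : Type*} [CommSemiring K] [Semiring H] [HopfAlgebra K H] [Fintype ι]
  [DecidableEq ι]

theorem mul_map_antipode_eq_one (v : Matrix ι ι H)
    (hcomul : ∀ i j, Coalgebra.comul (R := K) (v i j) = ∑ k, v i k ⊗ₜ[K] v k j)
    (hcounit : ∀ i j, Coalgebra.counit (R := K) (v i j) = if i = j then 1 else 0) :
    v * v.map (HopfAlgebra.antipode K) = 1 := by
  ext i j
  have h := HopfAlgebra.mul_antipode_lTensor_comul_apply (R := K) (v i j)
  rw [hcomul, hcounit] at h
  simp only [map_sum, LinearMap.lTensor_tmul, LinearMap.mul'_apply] at h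
  simp only [mul_apply, map_apply, one_apply, h]
  split_ifs <;> simp

theorem map_antipode_eq_of_mul_eq_one {v w : Matrix ι ι H}
    (hcomul : ∀ i j, Coalgebra.comul (R := K) (v i j) = ∑ k, v i k ⊗ₜ[K] v k j)
    (hcounit : ∀ i j, Coalgebra.counit (R := K) (v i j) = if i = j then 1 else 0)
    (hwv : w * v = 1) :
    v.map (HopfAlgebra.antipode K) = w :=
  calc v.map (HopfAlgebra.antipode K)
      = (w * v) * v.map (HopfAlgebra.antipode K) := by rw [hwv, Matrix.one_mul]
    _ = w := by rw [Matrix.mul_assoc, mul_map_antipode_eq_one v hcomul hcounit, Matrix.mul_one]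

end Antipode

section InvariantForm

variable {K H ι : Type*} [CommSemiring K] [Semiring H] [Algebra K H] [Fintype ι]

theorem transpose_mul_map_algebraMap_mul_eq {B : Matrix ι ι K} {v : Matrix ι ι H}
    (hpres : ∀ k l, ∑ i, ∑ j, B i j • (v i k * v j l) = B k l • (1 : H)) :
    vᵀ * B.map (algebraMap K H) * v = B.map (algebraMap K H) := by
  ext k l
  rw [map_apply, Algebra.algebraMap_eq_smul_one, ← hpres, mul_apply, Finset.sum_comm]
  simp only [mul_apply, Finset.sum_mul]
  refine Finset.sum_congr rfl fun i _ => Finset.sum_congr rfl fun j _ => ?_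
  rw [transpose_apply, map_apply, ← Algebra.commutes, ← Algebra.smul_def, smul_mul_assoc]

theorem mul_eq_one_of_transpose_mul_mul_eq [DecidableEq ι] {B B' : Matrix ι ι K}
    {v : Matrix ι ι H} (hB'B : B' * B = 1)
    (hv : vᵀ * B.map (algebraMap K H) * v = B.map (algebraMap K H)) :
    B'.map (algebraMap K H) * vᵀ * B.map (algebraMap K H) * v = 1 := by
  simp only [Matrix.mul_assoc]
  rw [← Matrix.mul_assoc vᵀ, hv, ← Matrix.map_mul, hB'B,
    Matrix.map_one _ (map_zero _) (map_one _)]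

end InvariantForm

end Matrix

open Matrix in
theorem stmt_11_general {K H : Type*} [Field K] [Ring H] [HopfAlgebra K H]
    {n : ℕ}
    (B B' : Matrix (Fin n) (Fin n) K) (hB'B : B' * B = 1)
    (v : Fin n → Fin n → H)
    (hcomul : ∀ μ ν : Fin n,
      Coalgebra.comul (R := K) (v μ ν) = ∑ lam : Fin n, v μ lam ⊗ₜ[K] v lam ν)
    (hcounit : ∀ μ ν : Fin n,
      Coalgebra.counit (R := K) (v μ ν) = if μ = ν then (1 : K) else 0)
    (hpres : ∀ lam ρ : Fin n,
      ∑ μ : Fin n, ∑ ν : Fin n, B μ ν • (v μ lam * v ν ρ) = B lam ρ • (1 : H)) :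
    ∀ σ ν : Fin n,
      HopfAlgebra.antipode (R := K) (v σ ν)
        = ∑ lam : Fin n, ∑ μ : Fin n, (B' σ lam * B μ ν) • v μ lam := by
  intro σ ν
  have hS : (of v).map (HopfAlgebra.antipode K)
      = B'.map (algebraMap K H) * (of v)ᵀ * B.map (algebraMap K H) :=
    map_antipode_eq_of_mul_eq_one hcomul hcounit
      (mul_eq_one_of_transpose_mul_mul_eq hB'B (transpose_mul_map_algebraMap_mul_eq hpres))
  rw [← of_apply v, ← map_apply (f := HopfAlgebra.antipode K), hS]
  simp only [mul_apply, Finset.sum_mul]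
  rw [Finset.sum_comm]
  refine Finset.sum_congr rfl fun lam _ => Finset.sum_congr rfl fun μ _ => ?_
  rw [map_apply, map_apply, transpose_apply, of_apply, ← Algebra.commutes, ← Algebra.smul_def,
    ← Algebra.smul_def, smul_smul, mul_comm]

/-- For a Hopf algebra `H` with multiplicative matrix `v` preserving a
nondegenerate bilinear form `b`, the antipode is `S(v^σ_ν) = Σ b^{σλ} v^μ_λ b_{μν}`. -/
theorem stmt_11 {K H : Type*} [Field K] [Ring H] [HopfAlgebra K H]
    {n : ℕ} (hn : 2 ≤ n)
    (B B' : Matrix (Fin n) (Fin n) K) (hBB' : B * B' = 1) (hB'B : B' * B = 1)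
    (v : Fin n → Fin n → H)
    (hcomul : ∀ μ ν : Fin n,
      Coalgebra.comul (R := K) (v μ ν) = ∑ lam : Fin n, v μ lam ⊗ₜ[K] v lam ν)
    (hcounit : ∀ μ ν : Fin n,
      Coalgebra.counit (R := K) (v μ ν) = if μ = ν then (1 : K) else 0)
    (hpres : ∀ lam ρ : Fin n,
      ∑ μ : Fin n, ∑ ν : Fin n, B μ ν • (v μ lam * v ν ρ) = B lam ρ • (1 : H)) :
    ∀ σ ν : Fin n,
      HopfAlgebra.antipode (R := K) (v σ ν)
        = ∑ lam : Fin n, ∑ μ : Fin n, (B' σ lam * B μ ν) • v μ lam :=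
  stmt_11_general B B' hB'B v hcomul hcounit hpres
end

section
/- In the algebra H(w) (generated by u^μ_ν, s^μ_ν with relations Σ_λ u^μ_λ s^λ_ν = δ^μ_ν, Σ Q^λ_ν u^ρ_λ (Q^{-1})^σ_ρ s^μ_σ = δ^μ_ν, and Σ w_{λ₁...λ_m} u^{λ₁}_{μ₁}⋯u^{λ_m}_{μ_m} = w_{μ₁...μ_m}·1), the following relations hold: (a) Σ w_{μ₁...μ_m} s^{μ_m}_{ν_m} ⋯ s^{μ₁}_{ν₁} = w_{ν₁...ν_m}·1; (b) Σ_ρ s^μ_ρ u^ρ_ν = δ^μ_ν·1; (c) Σ s^λ_ν Q^τ_λ u^ρ_τ (Q^{-1})^μ_ρ = δ^μ_ν·1. -/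
/-!
Write `U = (u^μ_ν)` and `S = (s^μ_ν)`, so `U S = 1`. The tensor powers `U^{⊗k}` and
`S^{⊗k}`, the latter with its factors multiplied in reverse order (i.e. computed in `Aᵐᵒᵖ`),
are again mutually inverse, so the invariance `w U^{⊗(m+1)} = w` transfers to the reversed
`S^{⊗(m+1)}`; this is (a). Contracting an invariance relation `w X^{⊗(m+1)} = w` with `w̃` in
the first `m` slots exhibits a left inverse of `X`. For `X = U` this left inverse must equal
the right inverse `S`, giving (b). For `X = S` over `Aᵐᵒᵖ`, invariance is (a), and the twisted
relation says that `Q⁻¹ U Q` is a right inverse of `S` there; the two inverses agree, giving (c).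
-/

open MulOpposite

theorem Fin.sum_univ_pi_snoc {ι M : Type*} [Fintype ι] [AddCommMonoid M] {k : ℕ}
    (g : (Fin (k + 1) → ι) → M) :
    ∑ f, g f = ∑ a : Fin k → ι, ∑ i, g (Fin.snoc a i) := by
  rw [← (Fin.snocEquiv fun _ => ι).sum_comp, Fintype.sum_prod_type_right]
  rfl

namespace Matrix

variable {ι R : Type*}

theorem mul_eq_one_iff_sum [Fintype ι] [DecidableEq ι] [NonAssocSemiring R]
    {X Y : Matrix ι ι R} :
    X * Y = 1 ↔ ∀ μ ν, ∑ σ, X μ σ * Y σ ν = if μ = ν then 1 else 0 := by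
  simp [← Matrix.ext_iff, mul_apply, one_apply]

theorem map_op_mul_map_op_eq_one_iff [Fintype ι] [DecidableEq ι] [NonAssocSemiring R]
    {X Y : Matrix ι ι R} :
    X.map op * Y.map op = 1 ↔
      ∀ μ ν, ∑ σ, Y σ ν * X μ σ = if μ = ν then 1 else 0 := by
  rw [mul_eq_one_iff_sum]
  refine forall₂_congr fun μ ν => ?_
  have hop : ∑ σ, (X.map op) μ σ * (Y.map op) σ ν = op (∑ σ, Y σ ν * X μ σ) := by
    simp [Finset.op_sum]
  rw [hop]
  split_ifs <;> simp only [MulOpposite.op_eq_one_iff, MulOpposite.op_eq_zero_iff]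

def tensorPow [Monoid R] (x : Matrix ι ι R) (k : ℕ) : Matrix (Fin k → ι) (Fin k → ι) R :=
  of fun a b => (List.ofFn fun i => x (a i) (b i)).prod

theorem tensorPow_apply [Monoid R] (x : Matrix ι ι R) {k : ℕ} (a b : Fin k → ι) :
    tensorPow x k a b = (List.ofFn fun i => x (a i) (b i)).prod := rfl

theorem tensorPow_snoc [Monoid R] (x : Matrix ι ι R) {k : ℕ} (a b : Fin k → ι) (i j : ι) :
    tensorPow x (k + 1) (Fin.snoc a i) (Fin.snoc b j) = tensorPow x k a b * x i j := by
  rw [tensorPow_apply, tensorPow_apply, List.ofFn_succ']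
  simp

theorem tensorPow_map_op_apply [Monoid R] (x : Matrix ι ι R) {k : ℕ} (a b : Fin k → ι) :
    tensorPow (x.map op) k a b =
      op (List.ofFn fun i => x (a (Fin.rev i)) (b (Fin.rev i))).prod := by
  rw [op_list_prod, tensorPow_apply]
  simp [List.ofFn_eq_map, ← List.map_reverse, List.finRange_reverse, Function.comp_def]

theorem tensorPow_mul_tensorPow_map_op [Semiring R] [Fintype ι] [DecidableEq ι]
    {x y : Matrix ι ι R} (h : x * y = 1) (k : ℕ) :
    tensorPow x k * (tensorPow (y.map op) k).map unop = 1 := by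
  induction k with
  | zero =>
    ext a b
    obtain rfl := Subsingleton.elim a b
    simp [mul_apply, tensorPow_apply]
  | succ k ih =>
    ext f g
    cases f using Fin.snocCases with | _ a i => ?_
    cases g using Fin.snocCases with | _ c j => ?_
    have hij := congr_fun (congr_fun h i) j
    have hac := congr_fun (congr_fun ih a) c
    rw [mul_apply] at hij hac ⊢
    rw [Fin.sum_univ_pi_snoc]
    simp only [map_apply, tensorPow_snoc, unop_mul, unop_op]
    have hsplit : ∀ b,
        ∑ l, tensorPow x k a b * x i l * (y l j * unop (tensorPow (y.map op) k b c))
        = tensorPow x k a b * (∑ l, x i l * y l j) * unop (tensorPow (y.map op) k b c) := by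
      intro b
      simp only [Finset.mul_sum, Finset.sum_mul, mul_assoc]
    rw [Finset.sum_congr rfl fun b _ => hsplit b, hij]
    by_cases hij' : i = j
    · simpa [hij', one_apply, Fin.snoc_inj] using hac
    · simp [hij', Fin.snoc_inj]

section PreservesForm

variable {κ K : Type*} [Fintype κ] [CommSemiring K] [Semiring R] [Algebra K R]

def PreservesForm (w : κ → K) (X : Matrix κ κ R) : Prop :=
  ∀ b, ∑ a, w a • X a b = w b • (1 : R)

theorem PreservesForm.of_mul_eq_one [DecidableEq κ] {w : κ → K} {X Y : Matrix κ κ R}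
    (hX : PreservesForm w X) (h : X * Y = 1) : PreservesForm w Y := by
  unfold PreservesForm at hX
  intro c
  calc ∑ b, w b • Y b c = ∑ b, (∑ a, w a • X a b) * Y b c := by
        simp only [hX, smul_mul_assoc, one_mul]
    _ = ∑ a, w a • (X * Y) a c := by
        simp only [mul_apply, Finset.sum_mul, Finset.smul_sum, smul_mul_assoc]
        exact Finset.sum_comm
    _ = w c • (1 : R) := by simp [h, one_apply]

theorem PreservesForm.map_op {w : κ → K} {X : Matrix κ κ R} (hX : PreservesForm w X) :
    PreservesForm w (X.map op) := fun b => by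
  simpa using congrArg op (hX b)

theorem PreservesForm.exists_mul_eq_one [DecidableEq ι] [Fintype ι] {m : ℕ}
    {w : (Fin (m + 1) → ι) → K} {x : Matrix ι ι R}
    (hx : PreservesForm w (tensorPow x (m + 1)))
    (hw : ∃ wt : (Fin (m + 1) → ι) → K, ∀ μ ν,
      ∑ l : Fin m → ι, wt (Fin.cons μ l) * w (Fin.snoc l ν) = if μ = ν then 1 else 0) :
    ∃ L, L * x = 1 := by
  obtain ⟨wt, hwt⟩ := hw
  refine ⟨of fun μ l => ∑ k : Fin m → ι, ∑ a : Fin m → ι,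
    (wt (Fin.cons μ k) * w (Fin.snoc a l)) • tensorPow x m a k, ?_⟩
  ext μ ν
  have hcontract : ∀ k, ∑ l, ∑ a, w (Fin.snoc a l) • (tensorPow x m a k * x l ν)
      = w (Fin.snoc k ν) • (1 : R) := by
    intro k
    rw [← hx (Fin.snoc k ν), Fin.sum_univ_pi_snoc, Finset.sum_comm]
    simp only [tensorPow_snoc]
  calc _ = ∑ k, wt (Fin.cons μ k) •
        ∑ l, ∑ a, w (Fin.snoc a l) • (tensorPow x m a k * x l ν) := by
        simp only [mul_apply, of_apply, Finset.sum_mul, Finset.smul_sum, smul_mul_assoc,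
          mul_smul]
        rw [Finset.sum_comm]
    _ = (1 : Matrix ι ι R) μ ν := by
        simp only [hcontract, smul_smul, ← Finset.sum_smul, hwt, one_apply]
        split_ifs <;> simp

end PreservesForm

end Matrix

open Matrix

theorem stmt_12_general {K A : Type*} [Field K] [Ring A] [Algebra K A]
    {n m : ℕ}
    (wc : (Fin (m + 1) → Fin n) → K) (Q Qi : Matrix (Fin n) (Fin n) K)
    (hwt : ∃ wt : (Fin (m + 1) → Fin n) → K, ∀ μ ν : Fin n,
      ∑ l : Fin m → Fin n, wt (Fin.cons μ l) * wc (Fin.snoc l ν)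
        = if μ = ν then 1 else 0)
    (u s : Fin n → Fin n → A)
    (hus : ∀ μ ν : Fin n,
      ∑ lam : Fin n, u μ lam * s lam ν = if μ = ν then (1 : A) else 0)
    (htus : ∀ μ ν : Fin n,
      ∑ lam : Fin n, ∑ ρ : Fin n, ∑ σ : Fin n,
        (Q lam ν * Qi σ ρ) • (u ρ lam * s μ σ) = if μ = ν then (1 : A) else 0)
    (hinvw : ∀ μs : Fin (m + 1) → Fin n,
      ∑ ls : Fin (m + 1) → Fin n,
        wc ls • (List.ofFn fun i => u (ls i) (μs i)).prod = wc μs • (1 : A)) :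
    (∀ νs : Fin (m + 1) → Fin n,
      ∑ μs : Fin (m + 1) → Fin n,
        wc μs • (List.ofFn fun i => s (μs (Fin.rev i)) (νs (Fin.rev i))).prod
          = wc νs • (1 : A)) ∧
    (∀ μ ν : Fin n,
      ∑ ρ : Fin n, s μ ρ * u ρ ν = if μ = ν then (1 : A) else 0) ∧
    (∀ μ ν : Fin n,
      ∑ lam : Fin n, ∑ τ : Fin n, ∑ ρ : Fin n,
        (Q τ lam * Qi μ ρ) • (s lam ν * u ρ τ) = if μ = ν then (1 : A) else 0) := by
  have hUS : of u * of s = 1 := mul_eq_one_iff_sum.2 hus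
  have hU : PreservesForm wc (tensorPow (of u) (m + 1)) := hinvw
  have hS : PreservesForm wc ((tensorPow ((of s).map op) (m + 1)).map unop) :=
    hU.of_mul_eq_one (tensorPow_mul_tensorPow_map_op hUS _)
  refine ⟨fun νs => by simpa [tensorPow_map_op_apply] using hS νs, ?_, ?_⟩
  · obtain ⟨L, hL⟩ := hU.exists_mul_eq_one hwt
    rw [left_inv_eq_right_inv hL hUS] at hL
    exact mul_eq_one_iff_sum.1 hL
  · set X : Matrix (Fin n) (Fin n) A :=
      of fun σ ν => ∑ lam, ∑ ρ, (Q lam ν * Qi σ ρ) • u ρ lam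
    have hSX : (of s).map op * X.map op = 1 := by
      refine map_op_mul_map_op_eq_one_iff.2 fun μ ν => ?_
      rw [← htus]
      simp only [X, of_apply, Finset.sum_mul, smul_mul_assoc]
      exact Finset.sum_comm.trans (Finset.sum_congr rfl fun _ _ => Finset.sum_comm)
    have hSop : PreservesForm wc (tensorPow ((of s).map op) (m + 1)) := by
      simpa using hS.map_op
    obtain ⟨L, hL⟩ := hSop.exists_mul_eq_one hwt
    intro μ ν
    rw [left_inv_eq_right_inv hL hSX] at hL
    rw [← map_op_mul_map_op_eq_one_iff.1 hL μ ν]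
    simp only [X, of_apply, Finset.mul_sum, mul_smul_comm]

/-- Proposition 5.1: In any algebra with elements `u^μ_ν`, `s^μ_ν`
satisfying the defining relations of `H(w)` for a preregular form `w` (components
`wc`, twisting matrix `Q` with inverse `Qi`), one has
(a) `Σ w_{μ₁…μ_M} s^{μ_M}_{ν_M} ⋯ s^{μ₁}_{ν₁} = w_{ν₁…ν_M}·1`,
(b) `Σ_ρ s^μ_ρ u^ρ_ν = δ^μ_ν·1`,
(c) `Σ s^λ_ν Q^τ_λ u^ρ_τ (Q⁻¹)^μ_ρ = δ^μ_ν·1`. -/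
theorem stmt_12 {K A : Type*} [Field K] [Ring A] [Algebra K A]
    {n m : ℕ} (hn : 2 ≤ n) (hm : 1 ≤ m)
    (wc : (Fin (m + 1) → Fin n) → K) (Q Qi : Matrix (Fin n) (Fin n) K)
    (hQQi : Q * Qi = 1) (hQiQ : Qi * Q = 1)
    (hcyc : ∀ ls : Fin (m + 1) → Fin n,
      wc ls = ∑ lam : Fin n, Q lam (ls (Fin.last m)) * wc (Fin.cons lam (Fin.init ls)))
    (hwt : ∃ wt : (Fin (m + 1) → Fin n) → K, ∀ μ ν : Fin n,
      ∑ l : Fin m → Fin n, wt (Fin.cons μ l) * wc (Fin.snoc l ν)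
        = if μ = ν then 1 else 0)
    (u s : Fin n → Fin n → A)
    (hus : ∀ μ ν : Fin n,
      ∑ lam : Fin n, u μ lam * s lam ν = if μ = ν then (1 : A) else 0)
    (htus : ∀ μ ν : Fin n,
      ∑ lam : Fin n, ∑ ρ : Fin n, ∑ σ : Fin n,
        (Q lam ν * Qi σ ρ) • (u ρ lam * s μ σ) = if μ = ν then (1 : A) else 0)
    (hinvw : ∀ μs : Fin (m + 1) → Fin n,
      ∑ ls : Fin (m + 1) → Fin n,
        wc ls • (List.ofFn fun i => u (ls i) (μs i)).prod = wc μs • (1 : A)) :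
    (∀ νs : Fin (m + 1) → Fin n,
      ∑ μs : Fin (m + 1) → Fin n,
        wc μs • (List.ofFn fun i => s (μs (Fin.rev i)) (νs (Fin.rev i))).prod
          = wc νs • (1 : A)) ∧
    (∀ μ ν : Fin n,
      ∑ ρ : Fin n, s μ ρ * u ρ ν = if μ = ν then (1 : A) else 0) ∧
    (∀ μ ν : Fin n,
      ∑ lam : Fin n, ∑ τ : Fin n, ∑ ρ : Fin n,
        (Q τ lam * Qi μ ρ) • (s lam ν * u ρ τ) = if μ = ν then (1 : A) else 0) :=
  stmt_12_general wc Q Qi hwt u s hus htus hinvw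
end

section
/- In the algebra H(w), for any w̃ in the polar Aff(w) (i.e. any w̃ with Σ w̃^{μλ₁...λ_{m-1}} w_{λ₁...λ_{m-1}ν} = δ^μ_ν), one has s^μ_ν = Σ w̃^{μ λ₁...λ_{m-1}} u^{ρ₁}_{λ₁} ⋯ u^{ρ_{m-1}}_{λ_{m-1}} w_{ρ₁...ρ_{m-1} ν} for all μ, ν. In particular the generators s^μ_ν are determined by the u^μ_ν, so H(w) is generated as an algebra by the u^μ_ν alone. -/
/-!
Write `P ρ l` for the product `u^{ρ₁}_{l₁} ⋯ u^{ρₘ}_{lₘ}`. Splitting off the last factor, the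
invariance of `w` under `u` reads `Σ_{ρ,σ} w_{ρσ} P ρ l u^σ_λ = w_{lλ}`. Multiplying on the right by
`s^λ_ν` and summing over `λ`, the relation `u s = 1` collapses the left side, so
`Σ_λ w_{lλ} s^λ_ν = Σ_ρ w_{ρν} P ρ l`. Contracting with the polar `w̃` turns the left side into
`s^μ_ν`.
-/

open Finset

theorem Fintype.sum_eq_sum_sum_snoc {α M : Type*} [Fintype α] [AddCommMonoid M] {m : ℕ}
    (f : (Fin (m + 1) → α) → M) :
    ∑ x, f x = ∑ ρ : Fin m → α, ∑ σ : α, f (Fin.snoc ρ σ) := by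
  rw [← (Fin.snocEquiv fun _ => α).sum_comp, Fintype.sum_prod_type, Finset.sum_comm]
  rfl

theorem List.prod_ofFn_snoc_snoc {α β M : Type*} [Monoid M] {m : ℕ} (f : α → β → M)
    (ρ : Fin m → α) (σ : α) (l : Fin m → β) (lam : β) :
    (List.ofFn fun i => f ((Fin.snoc ρ σ : Fin (m + 1) → α) i)
      ((Fin.snoc l lam : Fin (m + 1) → β) i)).prod
      = (List.ofFn fun i => f (ρ i) (l i)).prod * f σ lam := by
  rw [List.ofFn_succ']
  simp

section

variable {K A : Type*} [CommSemiring K] [Semiring A] [Algebra K A] {n m : ℕ}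
  (wc : (Fin (m + 1) → Fin n) → K) (u s : Fin n → Fin n → A)

theorem sum_sum_snoc_smul_prod_mul
    (hinvw : ∀ μs : Fin (m + 1) → Fin n,
      ∑ ls : Fin (m + 1) → Fin n,
        wc ls • (List.ofFn fun i => u (ls i) (μs i)).prod = wc μs • (1 : A))
    (l : Fin m → Fin n) (lam : Fin n) :
    ∑ ρ : Fin m → Fin n, ∑ σ : Fin n,
        wc (Fin.snoc ρ σ) • ((List.ofFn fun i => u (ρ i) (l i)).prod * u σ lam)
      = wc (Fin.snoc l lam) • (1 : A) := by
  rw [← hinvw, Fintype.sum_eq_sum_sum_snoc]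
  simp only [List.prod_ofFn_snoc_snoc]

theorem sum_snoc_smul_prod_eq_sum_smul
    (hus : ∀ μ ν : Fin n,
      ∑ lam : Fin n, u μ lam * s lam ν = if μ = ν then (1 : A) else 0)
    (hinvw : ∀ μs : Fin (m + 1) → Fin n,
      ∑ ls : Fin (m + 1) → Fin n,
        wc ls • (List.ofFn fun i => u (ls i) (μs i)).prod = wc μs • (1 : A))
    (l : Fin m → Fin n) (ν : Fin n) :
    ∑ ρ : Fin m → Fin n, wc (Fin.snoc ρ ν) • (List.ofFn fun i => u (ρ i) (l i)).prod
      = ∑ lam : Fin n, wc (Fin.snoc l lam) • s lam ν := calc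
  _ = ∑ ρ : Fin m → Fin n, ∑ σ : Fin n, wc (Fin.snoc ρ σ) •
        ((List.ofFn fun i => u (ρ i) (l i)).prod * ∑ lam : Fin n, u σ lam * s lam ν) := by
      simp_rw [hus, mul_ite, mul_one, mul_zero, smul_ite, smul_zero, sum_ite_eq',
        mem_univ, if_true]
  _ = ∑ lam : Fin n, (∑ ρ : Fin m → Fin n, ∑ σ : Fin n,
        wc (Fin.snoc ρ σ) • ((List.ofFn fun i => u (ρ i) (l i)).prod * u σ lam)) * s lam ν := by
      simp_rw [mul_sum, smul_sum, sum_mul, smul_mul_assoc, mul_assoc]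
      exact (sum_congr rfl fun _ _ => sum_comm).trans sum_comm
  _ = ∑ lam : Fin n, wc (Fin.snoc l lam) • s lam ν := by
      simp_rw [sum_sum_snoc_smul_prod_mul wc u hinvw, smul_mul_assoc, one_mul]

end

theorem eq_sum_polar_smul_sum_smul {K A : Type*} [CommSemiring K] [AddCommMonoid A] [Module K A]
    {n m : ℕ} (wc wt : (Fin (m + 1) → Fin n) → K)
    (hwt : ∀ μ ν : Fin n,
      ∑ l : Fin m → Fin n, wt (Fin.cons μ l) * wc (Fin.snoc l ν) = if μ = ν then 1 else 0)
    (x : Fin n → A) (μ : Fin n) :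
    x μ = ∑ l : Fin m → Fin n, wt (Fin.cons μ l) • ∑ lam : Fin n, wc (Fin.snoc l lam) • x lam := by
  simp_rw [smul_sum, smul_smul]
  rw [sum_comm]
  simp_rw [← sum_smul, hwt, ite_smul, one_smul, zero_smul, sum_ite_eq, mem_univ, if_true]

theorem stmt_13_general {K A : Type*} [Field K] [Ring A] [Algebra K A]
    {n m : ℕ}
    (wc : (Fin (m + 1) → Fin n) → K)
    (u s : Fin n → Fin n → A)
    (hus : ∀ μ ν : Fin n,
      ∑ lam : Fin n, u μ lam * s lam ν = if μ = ν then (1 : A) else 0)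
    (hinvw : ∀ μs : Fin (m + 1) → Fin n,
      ∑ ls : Fin (m + 1) → Fin n,
        wc ls • (List.ofFn fun i => u (ls i) (μs i)).prod = wc μs • (1 : A)) :
    ∀ wt : (Fin (m + 1) → Fin n) → K,
      (∀ μ ν : Fin n,
        ∑ l : Fin m → Fin n, wt (Fin.cons μ l) * wc (Fin.snoc l ν)
          = if μ = ν then 1 else 0) →
      ∀ μ ν : Fin n,
        s μ ν = ∑ l : Fin m → Fin n, ∑ ρ : Fin m → Fin n,
          (wt (Fin.cons μ l) * wc (Fin.snoc ρ ν)) •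
            (List.ofFn fun i => u (ρ i) (l i)).prod := by
  intro wt hwt μ ν
  rw [eq_sum_polar_smul_sum_smul wc wt hwt (fun lam => s lam ν) μ]
  refine sum_congr rfl fun l _ => ?_
  rw [← sum_snoc_smul_prod_eq_sum_smul wc u s hus hinvw l ν, smul_sum]
  simp_rw [smul_smul]

/-- Relation (20): In any algebra with elements `u^μ_ν`, `s^μ_ν`
satisfying the defining relations of `H(w)`, for every polar element `w̃ ∈ Aff(w)`
one has `s^μ_ν = Σ w̃^{μλ₁…λ_{M-1}} u^{ρ₁}_{λ₁} ⋯ u^{ρ_{M-1}}_{λ_{M-1}} w_{ρ₁…ρ_{M-1}ν}`;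
in particular the `s^μ_ν` are determined by the `u^μ_ν`. -/
theorem stmt_13 {K A : Type*} [Field K] [Ring A] [Algebra K A]
    {n m : ℕ} (hn : 2 ≤ n) (hm : 1 ≤ m)
    (wc : (Fin (m + 1) → Fin n) → K) (Q Qi : Matrix (Fin n) (Fin n) K)
    (hQQi : Q * Qi = 1) (hQiQ : Qi * Q = 1)
    (hcyc : ∀ ls : Fin (m + 1) → Fin n,
      wc ls = ∑ lam : Fin n, Q lam (ls (Fin.last m)) * wc (Fin.cons lam (Fin.init ls)))
    (u s : Fin n → Fin n → A)
    (hus : ∀ μ ν : Fin n,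
      ∑ lam : Fin n, u μ lam * s lam ν = if μ = ν then (1 : A) else 0)
    (htus : ∀ μ ν : Fin n,
      ∑ lam : Fin n, ∑ ρ : Fin n, ∑ σ : Fin n,
        (Q lam ν * Qi σ ρ) • (u ρ lam * s μ σ) = if μ = ν then (1 : A) else 0)
    (hinvw : ∀ μs : Fin (m + 1) → Fin n,
      ∑ ls : Fin (m + 1) → Fin n,
        wc ls • (List.ofFn fun i => u (ls i) (μs i)).prod = wc μs • (1 : A)) :
    ∀ wt : (Fin (m + 1) → Fin n) → K,
      (∀ μ ν : Fin n,
        ∑ l : Fin m → Fin n, wt (Fin.cons μ l) * wc (Fin.snoc l ν)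
          = if μ = ν then 1 else 0) →
      ∀ μ ν : Fin n,
        s μ ν = ∑ l : Fin m → Fin n, ∑ ρ : Fin m → Fin n,
          (wt (Fin.cons μ l) * wc (Fin.snoc ρ ν)) •
            (List.ofFn fun i => u (ρ i) (l i)).prod :=
  stmt_13_general wc u s hus hinvw
end

section
/- Universal property of H(w): let w be a preregular m-linear form and H any Hopf algebra with elements v^μ_ν satisfying Δ(v^μ_ν) = Σ v^μ_λ ⊗ v^λ_ν, ε(v^μ_ν) = δ^μ_ν, and Σ w_{μ₁...μ_m} v^{μ₁}_{λ₁} ⋯ v^{μ_m}_{λ_m} = w_{λ₁...λ_m}·1. Then there is a unique Hopf algebra homomorphism φ : H(w) → H with φ(u^μ_ν) = v^μ_ν for all μ, ν. -/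
/-! The homomorphism is forced on the generators, so the point is existence: `u ↦ v`,
`s ↦ S(v)` must respect the three defining relations. The first is the antipode axiom
`m ∘ (id ⊗ S) ∘ Δ = η ∘ ε` evaluated at `v^μ_ν`, and the third is the invariance of `w`.
For the twisted relation, multiply the invariance of `w` on the right by `S(v)` and contract
with the tensor `w̃` of preregularity: this writes the antipode as a polynomial in the `v`'s,
`S(v^ρ_ν) = Σ w̃_{ρ l} w_{μ' ν} v^{μ'₁}_{l₁} ⋯ v^{μ'ₘ}_{lₘ}`. Substituting, the cyclicity
`w_{l ν} = Σ_λ Q^λ_ν w_{λ l}` moves `Q⁻¹` through `w`, after which invariance of `w` and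
preregularity once more give `δ^μ_ν`. -/

open TensorProduct

namespace Stmt15

/-- Free algebra on the `2n²` generators `u^μ_ν`, `s^μ_ν`. -/
abbrev FA (K : Type*) [Field K] (n : ℕ) :=
  FreeAlgebra K ((Fin n × Fin n) ⊕ (Fin n × Fin n))

/-- The generator `u^μ_ν`. -/
def Ug (K : Type*) [Field K] {n : ℕ} (μ ν : Fin n) : FA K n :=
  FreeAlgebra.ι K (Sum.inl (μ, ν))

/-- The generator `s^μ_ν`. -/
def Sg (K : Type*) [Field K] {n : ℕ} (μ ν : Fin n) : FA K n :=
  FreeAlgebra.ι K (Sum.inr (μ, ν))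

/-- The defining relations of `H(w)`:
`Σ_λ u^μ_λ s^λ_ν = δ^μ_ν`, `Σ Q^λ_ν u^ρ_λ (Q⁻¹)^σ_ρ s^μ_σ = δ^μ_ν`, and
`Σ w_{λ₁…λ_M} u^{λ₁}_{μ₁} ⋯ u^{λ_M}_{μ_M} = w_{μ₁…μ_M}·1`. -/
inductive HwRel (K : Type*) [Field K] (n m : ℕ) (wc : (Fin (m + 1) → Fin n) → K)
    (Q Qi : Matrix (Fin n) (Fin n) K) : FA K n → FA K n → Prop
  | us (μ ν : Fin n) :
      HwRel K n m wc Q Qi (∑ lam : Fin n, Ug K μ lam * Sg K lam ν)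
        (if μ = ν then 1 else 0)
  | tus (μ ν : Fin n) :
      HwRel K n m wc Q Qi
        (∑ lam : Fin n, ∑ ρ : Fin n, ∑ σ : Fin n,
          (Q lam ν * Qi σ ρ) • (Ug K ρ lam * Sg K μ σ))
        (if μ = ν then 1 else 0)
  | invw (μs : Fin (m + 1) → Fin n) :
      HwRel K n m wc Q Qi
        (∑ ls : Fin (m + 1) → Fin n,
          wc ls • (List.ofFn fun i => Ug K (ls i) (μs i)).prod)
        (algebraMap K (FA K n) (wc μs))

/-- The algebra `H(w)`. -/
abbrev Hw (K : Type*) [Field K] (n m : ℕ) (wc : (Fin (m + 1) → Fin n) → K)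
    (Q Qi : Matrix (Fin n) (Fin n) K) := RingQuot (HwRel K n m wc Q Qi)

/-- The class of `u^μ_ν` in `H(w)`. -/
def uu (K : Type*) [Field K] (n m : ℕ) (wc : (Fin (m + 1) → Fin n) → K)
    (Q Qi : Matrix (Fin n) (Fin n) K) (μ ν : Fin n) : Hw K n m wc Q Qi :=
  RingQuot.mkAlgHom K (HwRel K n m wc Q Qi) (Ug K μ ν)

/-- The class of `s^μ_ν` in `H(w)`. -/
def ss (K : Type*) [Field K] (n m : ℕ) (wc : (Fin (m + 1) → Fin n) → K)
    (Q Qi : Matrix (Fin n) (Fin n) K) (μ ν : Fin n) : Hw K n m wc Q Qi :=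
  RingQuot.mkAlgHom K (HwRel K n m wc Q Qi) (Sg K μ ν)

lemma sum_pi_fin_succ_cons {M ι : Type*} [AddCommMonoid M] [Fintype ι] {m : ℕ}
    (g : (Fin (m + 1) → ι) → M) :
    ∑ μs, g μs = ∑ τ : ι, ∑ μ' : Fin m → ι, g (Fin.cons τ μ') := by
  rw [← Fintype.sum_prod_type']
  exact (Fintype.sum_equiv (Fin.consEquiv fun _ => ι) _ _ fun _ => rfl).symm

lemma sum_pi_fin_succ_snoc {M ι : Type*} [AddCommMonoid M] [Fintype ι] {m : ℕ}
    (g : (Fin (m + 1) → ι) → M) :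
    ∑ μs, g μs = ∑ τ : ι, ∑ μ' : Fin m → ι, g (Fin.snoc μ' τ) := by
  rw [← Fintype.sum_prod_type']
  exact (Fintype.sum_equiv (Fin.snocEquiv fun _ => ι) _ _ fun _ => rfl).symm

def entryProd {A ι : Type*} [Monoid A] {k : ℕ} (v : ι → ι → A) (a b : Fin k → ι) : A :=
  (List.ofFn fun i => v (a i) (b i)).prod

section EntryProd

variable {A ι : Type*} [Monoid A] {k : ℕ} (v : ι → ι → A) (a b : Fin k → ι) (x y : ι)

lemma entryProd_cons : entryProd v (Fin.cons x a) (Fin.cons y b) = v x y * entryProd v a b := by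
  simp [entryProd, List.ofFn_succ]

lemma entryProd_snoc : entryProd v (Fin.snoc a x) (Fin.snoc b y) = entryProd v a b * v x y := by
  simp only [entryProd, List.ofFn_succ', List.concat_eq_append, List.prod_append,
    List.prod_singleton, Fin.snoc_castSucc, Fin.snoc_last]

end EntryProd

lemma sum_mul_antipode_eq_of_comul {K H : Type*} [CommSemiring K] [Semiring H] [HopfAlgebra K H]
    {ι : Type*} [Fintype ι] [DecidableEq ι] (v : ι → ι → H)
    (hcomul : ∀ μ ν, Coalgebra.comul (R := K) (v μ ν) = ∑ lam, v μ lam ⊗ₜ[K] v lam ν)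
    (hcounit : ∀ μ ν, Coalgebra.counit (R := K) (v μ ν) = if μ = ν then (1 : K) else 0)
    (μ ν : ι) :
    ∑ σ, v μ σ * HopfAlgebra.antipode (R := K) (v σ ν) = if μ = ν then 1 else 0 := by
  have h := HopfAlgebra.mul_antipode_lTensor_comul_apply (R := K) (v μ ν)
  rw [hcomul, hcounit] at h
  simpa [LinearMap.mul'_apply, apply_ite (algebraMap K H)] using h

section CyclicForm

variable {K ι : Type*} [CommSemiring K] [Fintype ι] {m : ℕ} {wc : (Fin (m + 1) → ι) → K}
  {Q Qi : Matrix ι ι K}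

lemma sum_mul_wc_cons_eq_snoc
    (hcyc : ∀ ls, wc ls = ∑ lam, Q lam (ls (Fin.last m)) * wc (Fin.cons lam (Fin.init ls)))
    (l : Fin m → ι) (ν : ι) :
    ∑ lam, Q lam ν * wc (Fin.cons lam l) = wc (Fin.snoc l ν) := by
  simpa using (hcyc (Fin.snoc l ν)).symm

lemma sum_mul_wc_snoc_eq_cons [DecidableEq ι] (hQQi : Q * Qi = 1)
    (hcyc : ∀ ls, wc ls = ∑ lam, Q lam (ls (Fin.last m)) * wc (Fin.cons lam (Fin.init ls)))
    (ρ : ι) (l : Fin m → ι) :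
    ∑ σ, Qi σ ρ * wc (Fin.snoc l σ) = wc (Fin.cons ρ l) := by
  calc ∑ σ, Qi σ ρ * wc (Fin.snoc l σ)
      = ∑ τ, (Q * Qi) τ ρ * wc (Fin.cons τ l) := by
        simp_rw [← sum_mul_wc_cons_eq_snoc hcyc, Matrix.mul_apply, Finset.mul_sum,
          Finset.sum_mul]
        rw [Finset.sum_comm]
        exact Finset.sum_congr rfl fun _ _ => Finset.sum_congr rfl fun _ _ => by ring
    _ = wc (Fin.cons ρ l) := by simp [hQQi, Matrix.one_apply]

end CyclicForm

section PreservedForm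

variable {K A ι : Type*} [CommSemiring K] [Semiring A] [Algebra K A] [Fintype ι]
  [DecidableEq ι] {m : ℕ}
  {wc : (Fin (m + 1) → ι) → K} {v s : ι → ι → A}

lemma sum_wc_snoc_smul_entryProd
    (hpres : ∀ ls, ∑ μs, wc μs • entryProd v μs ls = wc ls • (1 : A))
    (hinv : ∀ μ ν, ∑ σ, v μ σ * s σ ν = if μ = ν then 1 else 0)
    (l : Fin m → ι) (ν : ι) :
    ∑ μ', wc (Fin.snoc μ' ν) • entryProd v μ' l = ∑ σ, wc (Fin.snoc l σ) • s σ ν := by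
  calc ∑ μ', wc (Fin.snoc μ' ν) • entryProd v μ' l
      = ∑ μ', ∑ τ, wc (Fin.snoc μ' τ) • (entryProd v μ' l * ∑ σ, v τ σ * s σ ν) := by
        simp [hinv]
    _ = ∑ σ, (∑ μs, wc μs • entryProd v μs (Fin.snoc l σ)) * s σ ν := by
        simp only [sum_pi_fin_succ_snoc, entryProd_snoc, Finset.mul_sum, Finset.sum_mul,
          smul_mul_assoc, mul_assoc, Finset.smul_sum]
        rw [Finset.sum_comm]
        conv_rhs => rw [Finset.sum_comm]
        exact Finset.sum_congr rfl fun _ _ => Finset.sum_comm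
    _ = ∑ σ, wc (Fin.snoc l σ) • s σ ν := by simp [hpres]

lemma eq_sum_smul_entryProd
    (hpres : ∀ ls, ∑ μs, wc μs • entryProd v μs ls = wc ls • (1 : A))
    (hinv : ∀ μ ν, ∑ σ, v μ σ * s σ ν = if μ = ν then 1 else 0)
    {wt : (Fin (m + 1) → ι) → K}
    (hwt : ∀ μ ν, ∑ l : Fin m → ι, wt (Fin.cons μ l) * wc (Fin.snoc l ν)
      = if μ = ν then 1 else 0)
    (ρ ν : ι) :
    s ρ ν = ∑ l, ∑ μ', (wt (Fin.cons ρ l) * wc (Fin.snoc μ' ν)) • entryProd v μ' l := by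
  calc s ρ ν = ∑ σ, (∑ l, wt (Fin.cons ρ l) * wc (Fin.snoc l σ)) • s σ ν := by simp [hwt]
    _ = ∑ l, wt (Fin.cons ρ l) • ∑ σ, wc (Fin.snoc l σ) • s σ ν := by
        simp only [Finset.sum_smul, Finset.smul_sum, smul_smul]
        exact Finset.sum_comm
    _ = _ := by simp only [← sum_wc_snoc_smul_entryProd hpres hinv, Finset.smul_sum, smul_smul]

lemma sum_twisted_mul_eq {Q Qi : Matrix ι ι K} (hQQi : Q * Qi = 1)
    (hcyc : ∀ ls, wc ls = ∑ lam, Q lam (ls (Fin.last m)) * wc (Fin.cons lam (Fin.init ls)))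
    (hpres : ∀ ls, ∑ μs, wc μs • entryProd v μs ls = wc ls • (1 : A))
    (hinv : ∀ μ ν, ∑ σ, v μ σ * s σ ν = if μ = ν then 1 else 0)
    {wt : (Fin (m + 1) → ι) → K}
    (hwt : ∀ μ ν, ∑ l : Fin m → ι, wt (Fin.cons μ l) * wc (Fin.snoc l ν)
      = if μ = ν then 1 else 0)
    (μ ν : ι) :
    ∑ lam, ∑ ρ, ∑ σ, (Q lam ν * Qi σ ρ) • (v ρ lam * s μ σ) = if μ = ν then 1 else 0 := by
  have hQi (ρ : ι) : ∑ σ, Qi σ ρ • s μ σ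
      = ∑ l, ∑ μ', (wt (Fin.cons μ l) * wc (Fin.cons ρ μ')) • entryProd v μ' l := by
    simp_rw [eq_sum_smul_entryProd hpres hinv hwt μ, Finset.smul_sum, smul_smul,
      ← sum_mul_wc_snoc_eq_cons hQQi hcyc ρ, Finset.mul_sum, Finset.sum_smul]
    rw [Finset.sum_comm]
    refine Finset.sum_congr rfl fun l _ => ?_
    rw [Finset.sum_comm]
    exact Finset.sum_congr rfl fun _ _ => Finset.sum_congr rfl fun _ _ => by rw [mul_left_comm]
  have hrow (lam : ι) : ∑ ρ, v ρ lam * ∑ σ, Qi σ ρ • s μ σ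
      = ∑ l, (wt (Fin.cons μ l) * wc (Fin.cons lam l)) • (1 : A) := by
    simp_rw [hQi, Finset.mul_sum, mul_smul_comm, mul_smul, ← hpres, sum_pi_fin_succ_cons,
      entryProd_cons, Finset.smul_sum]
    exact Finset.sum_comm
  calc ∑ lam, ∑ ρ, ∑ σ, (Q lam ν * Qi σ ρ) • (v ρ lam * s μ σ)
      = ∑ lam, Q lam ν • ∑ ρ, v ρ lam * ∑ σ, Qi σ ρ • s μ σ := by
        simp only [Finset.smul_sum, Finset.mul_sum, mul_smul_comm, smul_smul]
    _ = (∑ l, wt (Fin.cons μ l) * wc (Fin.snoc l ν)) • (1 : A) := by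
        simp_rw [hrow, ← sum_mul_wc_cons_eq_snoc hcyc, Finset.mul_sum, Finset.smul_sum,
          Finset.sum_smul, smul_smul]
        rw [Finset.sum_comm]
        exact Finset.sum_congr rfl fun _ _ => Finset.sum_congr rfl fun _ _ => by rw [mul_left_comm]
    _ = if μ = ν then 1 else 0 := by simp [hwt]

end PreservedForm

section UniversalProperty

variable {K A : Type*} [Field K] [Semiring A] [Algebra K A] {n m : ℕ}
  {wc : (Fin (m + 1) → Fin n) → K} {Q Qi : Matrix (Fin n) (Fin n) K}

def freeLift (v s : Fin n → Fin n → A) : FA K n →ₐ[K] A :=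
  FreeAlgebra.lift K (Sum.elim (fun p => v p.1 p.2) (fun p => s p.1 p.2))

@[simp]
lemma freeLift_Ug (v s : Fin n → Fin n → A) (μ ν : Fin n) : freeLift v s (Ug K μ ν) = v μ ν := by
  simp [freeLift, Ug]

@[simp]
lemma freeLift_Sg (v s : Fin n → Fin n → A) (μ ν : Fin n) : freeLift v s (Sg K μ ν) = s μ ν := by
  simp [freeLift, Sg]

lemma freeLift_entryProd_Ug (v s : Fin n → Fin n → A) {k : ℕ} (a b : Fin k → Fin n) :
    freeLift v s (entryProd (Ug K) a b) = entryProd v a b := by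
  simp [entryProd, map_list_prod, List.map_ofFn, Function.comp_def]

variable {v s : Fin n → Fin n → A}
  (hinv : ∀ μ ν, ∑ σ, v μ σ * s σ ν = if μ = ν then 1 else 0)
  (htwist : ∀ μ ν, ∑ lam, ∑ ρ, ∑ σ, (Q lam ν * Qi σ ρ) • (v ρ lam * s μ σ)
    = if μ = ν then 1 else 0)
  (hpres : ∀ ls, ∑ μs, wc μs • entryProd v μs ls = wc ls • (1 : A))

def Hw.lift : Hw K n m wc Q Qi →ₐ[K] A :=
  RingQuot.liftAlgHom K ⟨freeLift v s, fun _ _ h => by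
    cases h with
    | us μ ν => simpa [apply_ite (freeLift v s)] using hinv μ ν
    | tus μ ν => simpa [apply_ite (freeLift v s)] using htwist μ ν
    | invw μs =>
      change freeLift v s (∑ ls, wc ls • entryProd (Ug K) ls μs) = _
      simp only [map_sum, map_smul, freeLift_entryProd_Ug, hpres, map_one,
        Algebra.algebraMap_eq_smul_one]⟩

lemma Hw.lift_uu (μ ν : Fin n) : Hw.lift hinv htwist hpres (uu K n m wc Q Qi μ ν) = v μ ν := by
  simp [Hw.lift, uu]

lemma Hw.lift_ss (μ ν : Fin n) : Hw.lift hinv htwist hpres (ss K n m wc Q Qi μ ν) = s μ ν := by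
  simp [Hw.lift, ss]

lemma Hw.algHom_ext {φ ψ : Hw K n m wc Q Qi →ₐ[K] A}
    (hu : ∀ μ ν, φ (uu K n m wc Q Qi μ ν) = ψ (uu K n m wc Q Qi μ ν))
    (hs : ∀ μ ν, φ (ss K n m wc Q Qi μ ν) = ψ (ss K n m wc Q Qi μ ν)) : φ = ψ := by
  refine RingQuot.ringQuot_ext' K _ _ (FreeAlgebra.hom_ext (funext ?_))
  rintro (⟨μ, ν⟩ | ⟨μ, ν⟩)
  exacts [hu μ ν, hs μ ν]

end UniversalProperty

theorem stmt_15_general {K : Type*} [Field K] {n m : ℕ}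
    (wc : (Fin (m + 1) → Fin n) → K) (Q Qi : Matrix (Fin n) (Fin n) K)
    (hQQi : Q * Qi = 1)
    (hcyc : ∀ ls : Fin (m + 1) → Fin n,
      wc ls = ∑ lam : Fin n, Q lam (ls (Fin.last m)) * wc (Fin.cons lam (Fin.init ls)))
    (hwt : ∃ wt : (Fin (m + 1) → Fin n) → K, ∀ μ ν : Fin n,
      ∑ l : Fin m → Fin n, wt (Fin.cons μ l) * wc (Fin.snoc l ν)
        = if μ = ν then 1 else 0)
    {H : Type*} [Ring H] [HopfAlgebra K H] (v : Fin n → Fin n → H)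
    (hcomul : ∀ μ ν : Fin n,
      Coalgebra.comul (R := K) (v μ ν) = ∑ lam : Fin n, v μ lam ⊗ₜ[K] v lam ν)
    (hcounit : ∀ μ ν : Fin n,
      Coalgebra.counit (R := K) (v μ ν) = if μ = ν then (1 : K) else 0)
    (hpres : ∀ ls : Fin (m + 1) → Fin n,
      ∑ μs : Fin (m + 1) → Fin n,
        wc μs • (List.ofFn fun i => v (μs i) (ls i)).prod = wc ls • (1 : H)) :
    ∃! φ : Hw K n m wc Q Qi →ₐ[K] H,
      (∀ μ ν : Fin n, φ (uu K n m wc Q Qi μ ν) = v μ ν) ∧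
      (∀ μ ν : Fin n,
        φ (ss K n m wc Q Qi μ ν) = HopfAlgebra.antipode (R := K) (v μ ν)) := by
  obtain ⟨wt, hwt⟩ := hwt
  have hinv := sum_mul_antipode_eq_of_comul v hcomul hcounit
  have htwist := sum_twisted_mul_eq hQQi hcyc hpres hinv hwt
  refine ⟨Hw.lift hinv htwist hpres,
    ⟨Hw.lift_uu hinv htwist hpres, Hw.lift_ss hinv htwist hpres⟩, ?_⟩
  rintro ψ ⟨hψu, hψs⟩
  exact Hw.algHom_ext (fun μ ν => (hψu μ ν).trans (Hw.lift_uu hinv htwist hpres μ ν).symm)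
    (fun μ ν => (hψs μ ν).trans (Hw.lift_ss hinv htwist hpres μ ν).symm)

/-- Theorem 5.3, universal property of `H(w)`: for any Hopf algebra
`H` with a multiplicative matrix `v` preserving the preregular form `w`, there is a
unique Hopf algebra homomorphism `φ : H(w) → H` with `φ(u^μ_ν) = v^μ_ν` (it then also
carries `s^μ_ν = S(u^μ_ν)` to `S(v^μ_ν)`). -/
theorem stmt_15 {K : Type*} [Field K] {n m : ℕ} (hn : 2 ≤ n) (hm : 1 ≤ m)
    (wc : (Fin (m + 1) → Fin n) → K) (Q Qi : Matrix (Fin n) (Fin n) K)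
    (hQQi : Q * Qi = 1) (hQiQ : Qi * Q = 1)
    (hcyc : ∀ ls : Fin (m + 1) → Fin n,
      wc ls = ∑ lam : Fin n, Q lam (ls (Fin.last m)) * wc (Fin.cons lam (Fin.init ls)))
    (hwt : ∃ wt : (Fin (m + 1) → Fin n) → K, ∀ μ ν : Fin n,
      ∑ l : Fin m → Fin n, wt (Fin.cons μ l) * wc (Fin.snoc l ν)
        = if μ = ν then 1 else 0)
    {H : Type*} [Ring H] [HopfAlgebra K H] (v : Fin n → Fin n → H)
    (hcomul : ∀ μ ν : Fin n,
      Coalgebra.comul (R := K) (v μ ν) = ∑ lam : Fin n, v μ lam ⊗ₜ[K] v lam ν)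
    (hcounit : ∀ μ ν : Fin n,
      Coalgebra.counit (R := K) (v μ ν) = if μ = ν then (1 : K) else 0)
    (hpres : ∀ ls : Fin (m + 1) → Fin n,
      ∑ μs : Fin (m + 1) → Fin n,
        wc μs • (List.ofFn fun i => v (μs i) (ls i)).prod = wc ls • (1 : H)) :
    ∃! φ : Hw K n m wc Q Qi →ₐ[K] H,
      (∀ μ ν : Fin n, φ (uu K n m wc Q Qi μ ν) = v μ ν) ∧
      (∀ μ ν : Fin n,
        φ (ss K n m wc Q Qi μ ν) = HopfAlgebra.antipode (R := K) (v μ ν)) :=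
  stmt_15_general wc Q Qi hQQi hcyc hwt v hcomul hcounit hpres

end Stmt15
end

section
/- In H(w) for m ≥ 3, the following relations hold: for all λ, ρ, ν₃, ..., ν_m ∈ {1, ..., n}, Σ_{μ₃, ..., μ_m} w_{λ ρ μ₃...μ_m} s^{μ_m}_{ν_m} ⋯ s^{μ₃}_{ν₃} = Σ_{ν₁,ν₂} w_{ν₁ ν₂ ν₃ ... ν_m} u^{ν₁}_λ u^{ν₂}_ρ. -/
private lemma ofFn_rev_aux {α : Type*} : ∀ {k : ℕ} (g : Fin k → α),
    List.ofFn (fun i => g i.rev) = (List.ofFn g).reverse := by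
  intro k
  induction k with
  | zero => intro g; simp
  | succ k ih =>
    intro g
    rw [List.ofFn_succ' (fun i => g i.rev), List.ofFn_succ (f := g)]
    simp only [Fin.rev_castSucc, Fin.rev_last, List.concat_eq_append,
      List.reverse_cons]
    rw [← ih (fun i => g i.succ)]

private lemma sum_swap5 {ι κ σ M : Type*} [Fintype ι] [Fintype κ] [Fintype σ]
    [AddCommMonoid M] (f : ι → ι → κ → κ → σ → M) :
    ∑ a, ∑ b, ∑ c, ∑ d, ∑ e, f a b c d e
      = ∑ c, ∑ d, ∑ e, ∑ a, ∑ b, f a b c d e := by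
  calc ∑ a, ∑ b, ∑ c, ∑ d, ∑ e, f a b c d e
      = ∑ a, ∑ c, ∑ b, ∑ d, ∑ e, f a b c d e :=
        Finset.sum_congr rfl fun a _ => Finset.sum_comm
    _ = ∑ c, ∑ a, ∑ b, ∑ d, ∑ e, f a b c d e := Finset.sum_comm
    _ = ∑ c, ∑ a, ∑ d, ∑ b, ∑ e, f a b c d e :=
        Finset.sum_congr rfl fun c _ => Finset.sum_congr rfl fun a _ =>
          Finset.sum_comm
    _ = ∑ c, ∑ d, ∑ a, ∑ b, ∑ e, f a b c d e :=
        Finset.sum_congr rfl fun c _ => Finset.sum_comm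
    _ = ∑ c, ∑ d, ∑ a, ∑ e, ∑ b, f a b c d e :=
        Finset.sum_congr rfl fun c _ => Finset.sum_congr rfl fun d _ =>
          Finset.sum_congr rfl fun a _ => Finset.sum_comm
    _ = ∑ c, ∑ d, ∑ e, ∑ a, ∑ b, f a b c d e :=
        Finset.sum_congr rfl fun c _ => Finset.sum_congr rfl fun d _ =>
          Finset.sum_comm

private lemma sum_cons_decomp {n k : ℕ} {M : Type*} [AddCommMonoid M]
    (F : (Fin (k + 1) → Fin n) → M) :
    ∑ μs : Fin (k + 1) → Fin n, F μs
      = ∑ a : Fin n, ∑ t : Fin k → Fin n, F (Fin.cons a t) := by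
  rw [← Equiv.sum_comp (Fin.consEquiv (fun _ => Fin n)) F, Fintype.sum_prod_type]
  rfl

/-- Lemma 7.1: In `H(w)` for an `M`-linear preregular form with
`M = m+2 ≥ 3`, one has
`Σ_{μ₃…μ_M} w_{λρμ₃…μ_M} s^{μ_M}_{ν_M} ⋯ s^{μ₃}_{ν₃}
   = Σ_{ν₁,ν₂} w_{ν₁ν₂ν₃…ν_M} u^{ν₁}_λ u^{ν₂}_ρ`. -/
theorem stmt_16 {K A : Type*} [Field K] [Ring A] [Algebra K A]
    {n m : ℕ} (hn : 2 ≤ n) (hm : 1 ≤ m)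
    (wc : (Fin (m + 2) → Fin n) → K) (Q Qi : Matrix (Fin n) (Fin n) K)
    (hQQi : Q * Qi = 1) (hQiQ : Qi * Q = 1)
    (hcyc : ∀ ls : Fin (m + 2) → Fin n,
      wc ls = ∑ lam : Fin n,
        Q lam (ls (Fin.last (m + 1))) * wc (Fin.cons lam (Fin.init ls)))
    (hwt : ∃ wt : (Fin (m + 2) → Fin n) → K, ∀ μ ν : Fin n,
      ∑ l : Fin (m + 1) → Fin n, wt (Fin.cons μ l) * wc (Fin.snoc l ν)
        = if μ = ν then 1 else 0)
    (u s : Fin n → Fin n → A)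
    (hus : ∀ μ ν : Fin n,
      ∑ lam : Fin n, u μ lam * s lam ν = if μ = ν then (1 : A) else 0)
    (htus : ∀ μ ν : Fin n,
      ∑ lam : Fin n, ∑ ρ : Fin n, ∑ σ : Fin n,
        (Q lam ν * Qi σ ρ) • (u ρ lam * s μ σ) = if μ = ν then (1 : A) else 0)
    (hinvw : ∀ μs : Fin (m + 2) → Fin n,
      ∑ ls : Fin (m + 2) → Fin n,
        wc ls • (List.ofFn fun i => u (ls i) (μs i)).prod = wc μs • (1 : A))
    (hsinw : ∀ νs : Fin (m + 2) → Fin n,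
      ∑ μs : Fin (m + 2) → Fin n,
        wc μs • (List.ofFn fun i => s (μs (Fin.rev i)) (νs (Fin.rev i))).prod
          = wc νs • (1 : A))
    (hsu : ∀ μ ν : Fin n,
      ∑ ρ : Fin n, s μ ρ * u ρ ν = if μ = ν then (1 : A) else 0) :
    ∀ (lam ρ : Fin n) (νs : Fin m → Fin n),
      ∑ μs : Fin m → Fin n,
        wc (Fin.cons lam (Fin.cons ρ μs)) •
          (List.ofFn fun i : Fin m => s (μs (Fin.rev i)) (νs (Fin.rev i))).prod
        = ∑ ν₁ : Fin n, ∑ ν₂ : Fin n,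
            wc (Fin.cons ν₁ (Fin.cons ν₂ νs)) • (u ν₁ lam * u ν₂ ρ) := by
  intro lam ρ νs
  classical
  -- reversal of `ofFn` products of `s`-entries
  have ofr : ∀ (k : ℕ) (f g : Fin k → Fin n),
      (List.ofFn fun i : Fin k => s (f i.rev) (g i.rev))
        = (List.ofFn fun i : Fin k => s (f i) (g i)).reverse :=
    fun k f g => ofFn_rev_aux (fun j => s (f j) (g j))
  -- decompose the long product
  have hprod : ∀ (μ₁ μ₂ ν₁ ν₂ : Fin n) (t : Fin m → Fin n),
      (List.ofFn fun i : Fin (m + 2) =>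
          s ((Fin.cons μ₁ (Fin.cons μ₂ t) : Fin (m + 2) → Fin n) i.rev)
            ((Fin.cons ν₁ (Fin.cons ν₂ νs) : Fin (m + 2) → Fin n) i.rev)).prod
        = (List.ofFn fun i : Fin m => s (t i.rev) (νs i.rev)).prod
            * (s μ₂ ν₂ * s μ₁ ν₁) := by
    intro μ₁ μ₂ ν₁ ν₂ t
    rw [ofr (m + 2) (Fin.cons μ₁ (Fin.cons μ₂ t)) (Fin.cons ν₁ (Fin.cons ν₂ νs)),
      ofr m t νs, List.ofFn_succ, List.ofFn_succ]
    simp [Fin.cons_succ, Fin.cons_zero, List.reverse_cons, List.prod_append,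
      mul_assoc]
  -- key delta computation
  have hkey : ∀ (μ₁ μ₂ : Fin n) (c : K) (Pr : A),
      ∑ ν₁ : Fin n, ∑ ν₂ : Fin n,
          c • (Pr * (s μ₂ ν₂ * s μ₁ ν₁) * (u ν₁ lam * u ν₂ ρ))
        = if μ₁ = lam then (if μ₂ = ρ then c • Pr else 0) else 0 := by
    intro μ₁ μ₂ c Pr
    have hassoc : ∀ ν₁ ν₂ : Fin n,
        Pr * (s μ₂ ν₂ * s μ₁ ν₁) * (u ν₁ lam * u ν₂ ρ)
          = Pr * (s μ₂ ν₂ * (s μ₁ ν₁ * u ν₁ lam * u ν₂ ρ)) := by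
      intro ν₁ ν₂; simp only [mul_assoc]
    simp_rw [hassoc]
    rw [Finset.sum_comm]
    have hinner : ∀ ν₂ : Fin n,
        ∑ ν₁ : Fin n, c • (Pr * (s μ₂ ν₂ * (s μ₁ ν₁ * u ν₁ lam * u ν₂ ρ)))
          = c • (Pr * (s μ₂ ν₂ * ((if μ₁ = lam then (1:A) else 0) * u ν₂ ρ))) := by
      intro ν₂
      rw [← Finset.smul_sum, ← Finset.mul_sum, ← Finset.mul_sum,
        ← Finset.sum_mul, hsu μ₁ lam]
    simp_rw [hinner]
    by_cases h1 : μ₁ = lam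
    · simp only [h1, if_true, one_mul]
      rw [← Finset.smul_sum, ← Finset.mul_sum, hsu μ₂ ρ]
      by_cases h2 : μ₂ = ρ <;> simp [h2]
    · simp [h1]
  -- per (ν₁, ν₂) expansion of the right-hand side summand
  have step1 : ∀ ν₁ ν₂ : Fin n,
      wc (Fin.cons ν₁ (Fin.cons ν₂ νs)) • (u ν₁ lam * u ν₂ ρ)
        = ∑ μ₁ : Fin n, ∑ μ₂ : Fin n, ∑ t : Fin m → Fin n,
            wc (Fin.cons μ₁ (Fin.cons μ₂ t)) •
              ((List.ofFn fun i : Fin m => s (t i.rev) (νs i.rev)).prod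
                * (s μ₂ ν₂ * s μ₁ ν₁) * (u ν₁ lam * u ν₂ ρ)) := by
    intro ν₁ ν₂
    have h0 := hsinw (Fin.cons ν₁ (Fin.cons ν₂ νs))
    have e1 : wc (Fin.cons ν₁ (Fin.cons ν₂ νs)) • (u ν₁ lam * u ν₂ ρ)
        = (∑ μs : Fin (m + 2) → Fin n,
            wc μs • (List.ofFn fun i => s (μs (Fin.rev i))
              ((Fin.cons ν₁ (Fin.cons ν₂ νs) : Fin (m + 2) → Fin n)
                (Fin.rev i))).prod) * (u ν₁ lam * u ν₂ ρ) := by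
      rw [h0, smul_mul_assoc, one_mul]
    rw [e1, Finset.sum_mul]
    simp_rw [smul_mul_assoc]
    rw [sum_cons_decomp (fun μs : Fin (m + 2) → Fin n =>
      wc μs • ((List.ofFn fun i => s (μs (Fin.rev i))
        ((Fin.cons ν₁ (Fin.cons ν₂ νs) : Fin (m + 2) → Fin n) (Fin.rev i))).prod
        * (u ν₁ lam * u ν₂ ρ)))]
    refine Finset.sum_congr rfl fun μ₁ _ => ?_
    rw [sum_cons_decomp (fun t' : Fin (m + 1) → Fin n =>
      wc (Fin.cons μ₁ t') • ((List.ofFn fun i =>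
        s ((Fin.cons μ₁ t' : Fin (m + 2) → Fin n) (Fin.rev i))
          ((Fin.cons ν₁ (Fin.cons ν₂ νs) : Fin (m + 2) → Fin n) (Fin.rev i))).prod
        * (u ν₁ lam * u ν₂ ρ)))]
    refine Finset.sum_congr rfl fun μ₂ _ =>
      Finset.sum_congr rfl fun t _ => ?_
    rw [hprod μ₁ μ₂ ν₁ ν₂ t]
  -- main computation
  symm
  calc ∑ ν₁ : Fin n, ∑ ν₂ : Fin n,
        wc (Fin.cons ν₁ (Fin.cons ν₂ νs)) • (u ν₁ lam * u ν₂ ρ)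
      = ∑ ν₁ : Fin n, ∑ ν₂ : Fin n, ∑ μ₁ : Fin n, ∑ μ₂ : Fin n,
          ∑ t : Fin m → Fin n,
            wc (Fin.cons μ₁ (Fin.cons μ₂ t)) •
              ((List.ofFn fun i : Fin m => s (t i.rev) (νs i.rev)).prod
                * (s μ₂ ν₂ * s μ₁ ν₁) * (u ν₁ lam * u ν₂ ρ)) :=
        Finset.sum_congr rfl fun ν₁ _ => Finset.sum_congr rfl fun ν₂ _ =>
          step1 ν₁ ν₂
    _ = ∑ μ₁ : Fin n, ∑ μ₂ : Fin n, ∑ t : Fin m → Fin n,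
          ∑ ν₁ : Fin n, ∑ ν₂ : Fin n,
            wc (Fin.cons μ₁ (Fin.cons μ₂ t)) •
              ((List.ofFn fun i : Fin m => s (t i.rev) (νs i.rev)).prod
                * (s μ₂ ν₂ * s μ₁ ν₁) * (u ν₁ lam * u ν₂ ρ)) :=
        sum_swap5 _
    _ = ∑ μ₁ : Fin n, ∑ μ₂ : Fin n, ∑ t : Fin m → Fin n,
          (if μ₁ = lam then (if μ₂ = ρ then
            wc (Fin.cons μ₁ (Fin.cons μ₂ t)) •
              (List.ofFn fun i : Fin m => s (t i.rev) (νs i.rev)).prod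
            else 0) else 0) := by
        refine Finset.sum_congr rfl fun μ₁ _ => Finset.sum_congr rfl fun μ₂ _ =>
          Finset.sum_congr rfl fun t _ => ?_
        exact hkey μ₁ μ₂ _ _
    _ = ∑ t : Fin m → Fin n, wc (Fin.cons lam (Fin.cons ρ t)) •
          (List.ofFn fun i : Fin m => s (t i.rev) (νs i.rev)).prod := by
        simp [Finset.sum_ite_irrel, Finset.sum_const_zero, Finset.sum_ite_eq']
end

section
/- For m = 3 and ε the signature (determinant) form on K³, the Hopf algebra H(ε) is not commutative. Specifically, there is an algebra homomorphism from H(ε) to the free algebra K⟨x,y⟩ sending the matrix (u^μ_ν) to the upper triangular matrix with rows (1,x,y),(0,1,0),(0,0,1) and (s^μ_ν) to the matrix with rows (1,-x,-y),(0,1,0),(0,0,1); since x and y do not commute in K⟨x,y⟩ and lie in the image, H(ε) is not commutative. -/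
namespace Stmt18

/-- Free algebra on the generators `u^μ_ν`, `s^μ_ν` (`μ, ν ∈ {1,2,3}`). -/
abbrev FA (K : Type*) [Field K] :=
  FreeAlgebra K ((Fin 3 × Fin 3) ⊕ (Fin 3 × Fin 3))

def Ug (K : Type*) [Field K] (μ ν : Fin 3) : FA K :=
  FreeAlgebra.ι K (Sum.inl (μ, ν))

def Sg (K : Type*) [Field K] (μ ν : Fin 3) : FA K :=
  FreeAlgebra.ι K (Sum.inr (μ, ν))

/-- The Levi-Civita components `ε_{λ₁λ₂λ₃}`. -/
def eps (K : Type*) [Field K] (ι : Fin 3 → Fin 3) : K :=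
  (Matrix.of fun i j : Fin 3 => if ι i = j then (1 : K) else 0).det

/-- The defining relations of `H(ε)` (with twisting element `Q = Id`):
`Σ_λ u^μ_λ s^λ_ν = δ^μ_ν`, `Σ_ρ u^ρ_ν s^μ_ρ = δ^μ_ν`, and
`Σ ε_{λ₁λ₂λ₃} u^{λ₁}_{μ₁} u^{λ₂}_{μ₂} u^{λ₃}_{μ₃} = ε_{μ₁μ₂μ₃}·1`. -/
inductive HepsRel (K : Type*) [Field K] : FA K → FA K → Prop
  | us (μ ν : Fin 3) :
      HepsRel K (∑ lam : Fin 3, Ug K μ lam * Sg K lam ν) (if μ = ν then 1 else 0)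
  | tus (μ ν : Fin 3) :
      HepsRel K (∑ ρ : Fin 3, Ug K ρ ν * Sg K μ ρ) (if μ = ν then 1 else 0)
  | invw (μs : Fin 3 → Fin 3) :
      HepsRel K
        (∑ ls : Fin 3 → Fin 3,
          eps K ls • (Ug K (ls 0) (μs 0) * Ug K (ls 1) (μs 1) * Ug K (ls 2) (μs 2)))
        (algebraMap K (FA K) (eps K μs))

/-- The Hopf algebra `H(ε)` of the signature form on `K³`. -/
abbrev Heps (K : Type*) [Field K] := RingQuot (HepsRel K)

def uu (K : Type*) [Field K] (μ ν : Fin 3) : Heps K :=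
  RingQuot.mkAlgHom K (HepsRel K) (Ug K μ ν)

def ss (K : Type*) [Field K] (μ ν : Fin 3) : Heps K :=
  RingQuot.mkAlgHom K (HepsRel K) (Sg K μ ν)

/-! The images of `u` and `s` are `1 + N` and `1 - N`, where `N` is the matrix with top row
`(0, x, y)` and zero elsewhere. Since `N² = (Nᵀ)² = 0`, the two inverse relations hold. In every
term of the `ε`-sum with `ε ≠ 0` at most one factor comes from the top row, the others being
entries of the identity, so the third relation reduces to an identity in `K`. Finally
`x = φ(u¹₂)` and `y = φ(u¹₃)` do not commute in `K⟨x,y⟩`. -/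

open Matrix

lemma sum_fun_fin_succ {M : Type*} [AddCommMonoid M] {n m : ℕ} (f : (Fin (n + 1) → Fin m) → M) :
    ∑ ls, f ls = ∑ a, ∑ v, f (Fin.cons a v) := by
  rw [← Fintype.sum_prod_type']
  exact (Fintype.sum_equiv (Fin.consEquiv _) _ _ fun _ => rfl).symm

lemma sum_fun_fin_three {M : Type*} [AddCommMonoid M] {m : ℕ} (f : (Fin 3 → Fin m) → M) :
    ∑ ls, f ls = ∑ a, ∑ b, ∑ c, f ![a, b, c] := by
  simp only [sum_fun_fin_succ (n := 2), sum_fun_fin_succ (n := 1), sum_fun_fin_succ (n := 0),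
    Fintype.sum_unique]
  rfl

lemma _root_.one_add_mul_one_sub_of_mul_self_eq_zero {R : Type*} [Ring R] {a : R}
    (h : a * a = 0) : (1 + a) * (1 - a) = 1 := by
  rw [add_mul, mul_sub, mul_sub, h]
  simp

lemma _root_.FreeAlgebra.ι_mul_ι_ne_ι_mul_ι {R X : Type*} [CommSemiring R] [Nontrivial R]
    {i j : X} (hij : i ≠ j) : FreeAlgebra.ι R i * FreeAlgebra.ι R j ≠
      FreeAlgebra.ι R j * FreeAlgebra.ι R i := by
  intro h
  have h' := congrArg FreeAlgebra.equivMonoidAlgebraFreeMonoid h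
  simp only [FreeAlgebra.equivMonoidAlgebraFreeMonoid, AlgEquiv.ofAlgHom_apply, map_mul,
    FreeAlgebra.lift_ι_apply, MonoidAlgebra.of_apply, MonoidAlgebra.single_mul_single,
    mul_one] at h'
  have hlist : [i, j] = [j, i] :=
    congrArg FreeMonoid.toList (MonoidAlgebra.single_left_injective one_ne_zero h')
  exact hij (List.cons_eq_cons.mp hlist).1

section Lift

variable (K : Type*) [Field K] {A : Type*} [Ring A] [Algebra K A]

noncomputable def FA.lift (U S : Matrix (Fin 3) (Fin 3) A) : FA K →ₐ[K] A :=
  FreeAlgebra.lift K (Sum.elim (fun p => U p.1 p.2) (fun p => S p.1 p.2))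

variable {K}

@[simp] lemma FA.lift_Ug (U S : Matrix (Fin 3) (Fin 3) A) (μ ν : Fin 3) :
    FA.lift K U S (Ug K μ ν) = U μ ν :=
  FreeAlgebra.lift_ι_apply _ _

@[simp] lemma FA.lift_Sg (U S : Matrix (Fin 3) (Fin 3) A) (μ ν : Fin 3) :
    FA.lift K U S (Sg K μ ν) = S μ ν :=
  FreeAlgebra.lift_ι_apply _ _

-- Over a noncommutative `A`, `∑ ρ, U ρ ν * S μ ρ` is `(Uᵀ * Sᵀ) ν μ`, not `(S * U) μ ν`.
variable {U S : Matrix (Fin 3) (Fin 3) A} (hUS : U * S = 1) (hUS_transpose : Uᵀ * Sᵀ = 1)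
  (hdet : ∀ μs : Fin 3 → Fin 3,
    ∑ ls : Fin 3 → Fin 3, eps K ls • (U (ls 0) (μs 0) * U (ls 1) (μs 1) * U (ls 2) (μs 2)) =
      algebraMap K A (eps K μs))

include hUS hUS_transpose hdet in
lemma FA.lift_eq_of_hepsRel ⦃a b : FA K⦄ (h : HepsRel K a b) :
    FA.lift K U S a = FA.lift K U S b := by
  cases h with
  | us μ ν =>
    simpa [mul_apply, one_apply, apply_ite (FA.lift K U S)] using congrFun (congrFun hUS μ) ν
  | tus μ ν =>
    simpa [mul_apply, one_apply, apply_ite (FA.lift K U S), eq_comm] using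
      congrFun (congrFun hUS_transpose ν) μ
  | invw μs => simpa using hdet μs

noncomputable def Heps.lift : Heps K →ₐ[K] A :=
  RingQuot.liftAlgHom K ⟨FA.lift K U S, FA.lift_eq_of_hepsRel hUS hUS_transpose hdet⟩

lemma Heps.lift_uu (μ ν : Fin 3) : Heps.lift hUS hUS_transpose hdet (uu K μ ν) = U μ ν := by
  rw [Heps.lift, uu, RingQuot.liftAlgHom_mkAlgHom_apply, FA.lift_Ug]

lemma Heps.lift_ss (μ ν : Fin 3) : Heps.lift hUS hUS_transpose hdet (ss K μ ν) = S μ ν := by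
  rw [Heps.lift, ss, RingQuot.liftAlgHom_mkAlgHom_apply, FA.lift_Sg]

end Lift

lemma sum_eps_smul {K M : Type*} [Field K] [AddCommGroup M] [Module K M]
    (f : Fin 3 → Fin 3 → Fin 3 → M) :
    ∑ ls : Fin 3 → Fin 3, eps K ls • f (ls 0) (ls 1) (ls 2) =
      f 0 1 2 - f 0 2 1 - f 1 0 2 + f 1 2 0 + f 2 0 1 - f 2 1 0 := by
  simp only [sum_fun_fin_three, Fin.sum_univ_three, eps, det_fin_three, of_apply, cons_val,
    cons_val_zero, cons_val_one, Fin.isValue, Fin.reduceEq, ↓reduceIte, zero_ne_one, one_ne_zero,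
    mul_ite, mul_one, mul_zero, sub_self, sub_zero, zero_sub, add_zero, zero_add, neg_zero,
    zero_smul, one_smul, neg_smul]
  abel

section TopRow

variable {A : Type*}

def topRow [Zero A] (x y : A) : Matrix (Fin 3) (Fin 3) A :=
  !![0, x, y; 0, 0, 0; 0, 0, 0]

lemma one_add_topRow [Ring A] (x y : A) :
    1 + topRow x y = !![1, x, y; 0, 1, 0; 0, 0, 1] := by
  ext i j; fin_cases i <;> fin_cases j <;> simp [topRow, one_apply]

lemma one_sub_topRow [Ring A] (x y : A) :
    1 - topRow x y = !![1, -x, -y; 0, 1, 0; 0, 0, 1] := by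
  ext i j; fin_cases i <;> fin_cases j <;> simp [topRow, one_apply]

lemma topRow_mul_self [NonUnitalNonAssocSemiring A] (x y : A) : topRow x y * topRow x y = 0 := by
  ext i j; fin_cases i <;> fin_cases j <;> simp [topRow, mul_apply, Fin.sum_univ_three]

lemma topRow_transpose_mul_self [NonUnitalNonAssocSemiring A] (x y : A) :
    (topRow x y)ᵀ * (topRow x y)ᵀ = 0 := by
  ext i j; fin_cases i <;> fin_cases j <;> simp [topRow, mul_apply, Fin.sum_univ_three]

lemma sum_eps_smul_one_add_topRow {K : Type*} [Field K] [Ring A] [Algebra K A] (x y : A)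
    (μs : Fin 3 → Fin 3) :
    ∑ ls : Fin 3 → Fin 3, eps K ls • ((1 + topRow x y) (ls 0) (μs 0) *
      (1 + topRow x y) (ls 1) (μs 1) * (1 + topRow x y) (ls 2) (μs 2)) =
      algebraMap K A (eps K μs) := by
  rw [sum_eps_smul fun i j k =>
    (1 + topRow x y) i (μs 0) * (1 + topRow x y) j (μs 1) * (1 + topRow x y) k (μs 2)]
  obtain ⟨a, b, c, rfl⟩ : ∃ a b c, μs = ![a, b, c] :=
    ⟨μs 0, μs 1, μs 2, by ext i; fin_cases i <;> rfl⟩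
  fin_cases a <;> fin_cases b <;> fin_cases c <;> simp [topRow, one_apply, eps, det_fin_three]

end TopRow

/-- Proposition 7.2: for `m = 3` the Hopf algebra `H(ε)` of the
determinant form on `K³` is not commutative: there is an algebra homomorphism
`H(ε) → K⟨x,y⟩` sending `(u^μ_ν)` to `[[1,x,y],[0,1,0],[0,0,1]]` and `(s^μ_ν)` to
`[[1,-x,-y],[0,1,0],[0,0,1]]`, and its image contains the noncommuting `x`, `y`. -/
theorem stmt_18 {K : Type*} [Field K] :
    (∃ φ : Heps K →ₐ[K] FreeAlgebra K (Fin 2),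
      (∀ μ ν : Fin 3,
        φ (uu K μ ν) =
          ![![1, FreeAlgebra.ι K 0, FreeAlgebra.ι K 1],
            ![0, 1, 0], ![0, 0, 1]] μ ν) ∧
      (∀ μ ν : Fin 3,
        φ (ss K μ ν) =
          ![![1, -FreeAlgebra.ι K 0, -FreeAlgebra.ι K 1],
            ![0, 1, 0], ![0, 0, 1]] μ ν)) ∧
    ¬ (∀ a b : Heps K, a * b = b * a) := by
  set x := FreeAlgebra.ι K (0 : Fin 2)
  set y := FreeAlgebra.ι K (1 : Fin 2)
  have hUS := one_add_mul_one_sub_of_mul_self_eq_zero (topRow_mul_self x y)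
  have hUS_transpose : (1 + topRow x y)ᵀ * (1 - topRow x y)ᵀ = 1 := by
    simpa only [transpose_add, transpose_sub, transpose_one] using
      one_add_mul_one_sub_of_mul_self_eq_zero (topRow_transpose_mul_self x y)
  set φ := Heps.lift (K := K) hUS hUS_transpose (sum_eps_smul_one_add_topRow x y)
  have hφu : ∀ μ ν, φ (uu K μ ν) = !![1, x, y; 0, 1, 0; 0, 0, 1] μ ν := fun μ ν => by
    rw [Heps.lift_uu, one_add_topRow]
  have hφs : ∀ μ ν, φ (ss K μ ν) = !![1, -x, -y; 0, 1, 0; 0, 0, 1] μ ν := fun μ ν => by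
    rw [Heps.lift_ss, one_sub_topRow]
  refine ⟨⟨φ, hφu, hφs⟩, fun hcomm => ?_⟩
  have hxy := congrArg φ (hcomm (uu K 0 1) (uu K 0 2))
  rw [map_mul, map_mul, hφu, hφu] at hxy
  exact FreeAlgebra.ι_mul_ι_ne_ι_mul_ι (by decide) hxy

end Stmt18
end
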